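/- arXiv:2006.11164 — 7 statements merged into one kernel-verified Lean document; each statement's English description precedes it below -/
import Mathlib

section
/- Let n, m ∈ ℕ, p ∈ P(n) and q ∈ P(m). Then p majorises q (p ≽ q) if and only if the support of p has at most m elements and there exists an m×m doubly stochastic matrix B (nonnegative entries, every row and every column summing to 1) such that p̂ B = q, where p̂ ∈ ℝ^m is the vector consisting of the nonzero entries of p padded with zeros to length m. -/
open scoped BigOperators ENNReal

/-- A probability vector: nonnegative entries summing to 1. -/
def IsProbVec {n : ℕ} (p : Fin n → ℝ) : Prop :=
  (∀ i, 0 ≤ p i) ∧ ∑ i, p i = 1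

/-- The uniform probability vector on `n` outcomes. -/
noncomputable def uniform (n : ℕ) : Fin n → ℝ := fun _ => (n : ℝ)⁻¹

/-- Kronecker (tensor) product of two vectors. -/
noncomputable def kron {n m : ℕ} (p : Fin n → ℝ) (q : Fin m → ℝ) : Fin (n * m) → ℝ :=
  fun i => p (finProdFinEquiv.symm i).1 * q (finProdFinEquiv.symm i).2

/-- Sum of the `k` largest entries (for vectors with nonnegative entries):
the supremum of sums over subsets of at most `k` indices. -/
noncomputable def maxPartialSum {n : ℕ} (p : Fin n → ℝ) (k : ℕ) : ℝ :=
  sSup { x | ∃ s : Finset (Fin n), s.card ≤ k ∧ ∑ i ∈ s, p i = x }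

/-- `p` majorises `q`: every partial sum of the `k` largest entries of `p`
dominates that of `q` (entries beyond a vector's length count as 0). -/
def Majorizes {n m : ℕ} (p : Fin n → ℝ) (q : Fin m → ℝ) : Prop :=
  ∀ k : ℕ, maxPartialSum q k ≤ maxPartialSum p k

/-- A channel: an `n × m` row-stochastic matrix. -/
def IsStochastic {n m : ℕ} (W : Matrix (Fin n) (Fin m) ℝ) : Prop :=
  (∀ i j, 0 ≤ W i j) ∧ ∀ i, ∑ j, W i j = 1

/-- Relative majorisation of pairs: some channel maps `(p, q)` to `(p', q')`. -/
def RelMaj {n m : ℕ} (p q : Fin n → ℝ) (p' q' : Fin m → ℝ) : Prop :=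
  ∃ W : Matrix (Fin n) (Fin m) ℝ, IsStochastic W ∧
    Matrix.vecMul p W = p' ∧ Matrix.vecMul q W = q'

/-- An entropy: a `[0,∞)`-valued function on probability vectors of all finite dimensions
that is monotone under mixing (majorisation), additive for Kronecker products,
and normalised so that `H(u₂) = log 2` (binary logarithm). -/
structure IsEntropy (H : (n : ℕ) → (Fin n → ℝ) → ℝ) : Prop where
  nonneg : ∀ {n : ℕ} (p : Fin n → ℝ), IsProbVec p → 0 ≤ H n p
  mono : ∀ {n m : ℕ} (p : Fin n → ℝ) (p' : Fin m → ℝ),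
    IsProbVec p → IsProbVec p' → Majorizes p p' → H n p ≤ H m p'
  additive : ∀ {n m : ℕ} (p : Fin n → ℝ) (q : Fin m → ℝ),
    IsProbVec p → IsProbVec q → H (n * m) (kron p q) = H n p + H m q
  normalized : H 2 (uniform 2) = Real.logb 2 2

/-- A monotone divergence: a `[0,∞]`-valued function on pairs of probability vectors of
equal finite dimension satisfying the data-processing inequality and `𝔻(1‖1) = 0`. -/
structure IsMonotoneDivergence (D : (n : ℕ) → (Fin n → ℝ) → (Fin n → ℝ) → ℝ≥0∞) : Prop where
  dpi : ∀ {n m : ℕ} (p q : Fin n → ℝ) (p' q' : Fin m → ℝ),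
    IsProbVec p → IsProbVec q → IsProbVec p' → IsProbVec q' →
    RelMaj p q p' q' → D m p' q' ≤ D n p q
  normalized : D 1 (fun _ => 1) (fun _ => 1) = 0

/-- A relative entropy: data-processing inequality, additivity for Kronecker products,
and the normalisation `𝔻(e₁‖u₂) = log 2` (binary logarithm). -/
structure IsRelativeEntropy (D : (n : ℕ) → (Fin n → ℝ) → (Fin n → ℝ) → ℝ≥0∞) : Prop where
  dpi : ∀ {n m : ℕ} (p q : Fin n → ℝ) (p' q' : Fin m → ℝ),
    IsProbVec p → IsProbVec q → IsProbVec p' → IsProbVec q' →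
    RelMaj p q p' q' → D m p' q' ≤ D n p q
  additive : ∀ {n m : ℕ} (p₁ q₁ : Fin n → ℝ) (p₂ q₂ : Fin m → ℝ),
    IsProbVec p₁ → IsProbVec q₁ → IsProbVec p₂ → IsProbVec q₂ →
    D (n * m) (kron p₁ p₂) (kron q₁ q₂) = D n p₁ q₁ + D m p₂ q₂
  normalized : D 2 ![1, 0] ![1/2, 1/2] = ENNReal.ofReal (Real.logb 2 2)

/-- `phat : Fin m → ℝ` consists of the nonzero entries of `p` (in order),
padded with zeros to length `m`. -/
def IsPaddedSupport {n m : ℕ} (p : Fin n → ℝ) (phat : Fin m → ℝ) : Prop :=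
  ∃ f : {i : Fin n // p i ≠ 0} → Fin m, StrictMono f ∧
    (∀ i, phat (f i) = p i.1) ∧ (∀ j, (∀ i, f i ≠ j) → phat j = 0)

/-
Padding by zeros changes no sum of largest entries, so `p` may be replaced by `p̂`, a vector of the
same dimension as `q`; the support bound holds because if more than `m` entries of `p` were
nonzero, no `m` of them could add up to `1 = ∑ q`.

By Birkhoff's theorem the vectors `p̂ B`, `B` doubly stochastic, form the convex hull of the
rearrangements of `p̂`. Sums of the `k` largest entries are convex and rearrangement invariant,
which gives `p̂ ≽ p̂ B`. Conversely, if `q` lay outside the hull, a separating functional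
`x ↦ ∑ cᵢ xᵢ` would be larger at `q` than at every rearrangement of `p̂`; but for the
rearrangement ordered like `c`, Abel summation turns `q ≼ p̂` into the opposite inequality.
-/

open Finset Matrix Equiv

lemma sum_le_sum_of_card_le_of_forall_le {ι : Type*} [DecidableEq ι] {s t : Finset ι}
    {v : ι → ℝ} (hv : ∀ i, 0 ≤ v i) (hst : #s ≤ #t) (htop : ∀ i ∈ t, ∀ j ∉ t, v j ≤ v i) :
    ∑ i ∈ s, v i ≤ ∑ i ∈ t, v i := by
  rw [← sum_sdiff_le_sum_sdiff]
  have hcard : #(s \ t) ≤ #(t \ s) := card_sdiff_le_card_sdiff_iff.2 hst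
  rcases (t \ s).eq_empty_or_nonempty with hts | hts
  · rw [hts, card_empty, Nat.le_zero, card_eq_zero] at hcard
    simp [hts, hcard]
  obtain ⟨j₀, hj₀, hmin⟩ := exists_min_image (t \ s) v hts
  calc ∑ i ∈ s \ t, v i ≤ #(s \ t) • v j₀ :=
        sum_le_card_nsmul _ _ _ fun i hi => htop j₀ (mem_sdiff.1 hj₀).1 i (mem_sdiff.1 hi).2
    _ ≤ #(t \ s) • v j₀ := nsmul_le_nsmul_left (hv j₀) hcard
    _ ≤ ∑ i ∈ t \ s, v i := card_nsmul_le_sum _ _ _ hmin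

section MaxPartialSum

variable {n : ℕ}

lemma maxPartialSum_set_finite (p : Fin n → ℝ) (k : ℕ) :
    {x | ∃ s : Finset (Fin n), #s ≤ k ∧ ∑ i ∈ s, p i = x}.Finite :=
  (Set.finite_range fun s : Finset (Fin n) => ∑ i ∈ s, p i).subset fun _ ⟨s, _, hs⟩ => ⟨s, hs⟩

lemma maxPartialSum_set_nonempty (p : Fin n → ℝ) (k : ℕ) :
    {x | ∃ s : Finset (Fin n), #s ≤ k ∧ ∑ i ∈ s, p i = x}.Nonempty :=
  ⟨0, ∅, by simp⟩

lemma sum_le_maxPartialSum (p : Fin n → ℝ) {k : ℕ} {s : Finset (Fin n)} (hs : #s ≤ k) :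
    ∑ i ∈ s, p i ≤ maxPartialSum p k :=
  le_csSup (maxPartialSum_set_finite p k).bddAbove ⟨s, hs, rfl⟩

lemma exists_sum_eq_maxPartialSum (p : Fin n → ℝ) (k : ℕ) :
    ∃ s : Finset (Fin n), #s ≤ k ∧ ∑ i ∈ s, p i = maxPartialSum p k :=
  (maxPartialSum_set_nonempty p k).csSup_mem (maxPartialSum_set_finite p k)

lemma maxPartialSum_le_iff {p : Fin n → ℝ} {k : ℕ} {M : ℝ} :
    maxPartialSum p k ≤ M ↔ ∀ s : Finset (Fin n), #s ≤ k → ∑ i ∈ s, p i ≤ M := by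
  rw [maxPartialSum, csSup_le_iff (maxPartialSum_set_finite p k).bddAbove
    (maxPartialSum_set_nonempty p k)]
  simp

lemma maxPartialSum_eq_sum {v : Fin n → ℝ} (hv : ∀ i, 0 ≤ v i) {k : ℕ} (hk : n ≤ k) :
    maxPartialSum v k = ∑ i, v i :=
  le_antisymm
    (maxPartialSum_le_iff.2 fun s _ =>
      sum_le_sum_of_subset_of_nonneg (subset_univ s) fun i _ _ => hv i)
    (sum_le_maxPartialSum v (by simpa using hk))

lemma maxPartialSum_le_of_comp {α : Type*} {m : ℕ} {y : Fin m → ℝ} {x : Fin n → ℝ}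
    {e : α → Fin m} {g : α → Fin n} (he : Function.Injective e) (hg : Function.Injective g)
    (hy : ∀ j ∉ Set.range e, y j = 0) (hyx : ∀ a, y (e a) = x (g a)) (k : ℕ) :
    maxPartialSum y k ≤ maxPartialSum x k := by
  refine maxPartialSum_le_iff.2 fun t ht => ?_
  have hcard : #(t.preimage e he.injOn) ≤ k :=
    (card_le_card_of_injOn e (fun a ha => mem_preimage.1 ha) he.injOn).trans ht
  calc ∑ j ∈ t, y j = ∑ a ∈ t.preimage e he.injOn, x (g a) := by
        rw [← sum_preimage e t he.injOn y fun j _ => hy j]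
        simp only [hyx]
    _ = ∑ i ∈ (t.preimage e he.injOn).map ⟨g, hg⟩, x i := by rw [sum_map]; rfl
    _ ≤ maxPartialSum x k := sum_le_maxPartialSum x (by rwa [card_map])

lemma maxPartialSum_comp_perm (v : Fin n → ℝ) (σ : Perm (Fin n)) (k : ℕ) :
    maxPartialSum (v ∘ σ) k = maxPartialSum v k :=
  le_antisymm
    (maxPartialSum_le_of_comp (e := id) Function.injective_id σ.injective (by simp)
      (fun _ => rfl) k)
    (maxPartialSum_le_of_comp (e := id) Function.injective_id σ.symm.injective (by simp)
      (fun _ => by simp) k)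

lemma card_support_le_of_sum_le_maxPartialSum {p : Fin n → ℝ} (hp : ∀ i, 0 ≤ p i) {k : ℕ}
    (h : ∑ i, p i ≤ maxPartialSum p k) : #{i | p i ≠ 0} ≤ k := by
  obtain ⟨s, hs, hsum⟩ := exists_sum_eq_maxPartialSum p k
  refine (card_le_card fun i hi => ?_).trans hs
  by_contra his
  have hpos : 0 < p i := (hp i).lt_of_ne' (mem_filter.1 hi).2
  have := sum_lt_sum_of_subset (subset_univ s) (mem_univ i) his hpos fun j _ _ => hp j
  linarith

end MaxPartialSum

section PaddedSupport

variable {n m : ℕ} {p : Fin n → ℝ} {phat : Fin m → ℝ}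

lemma exists_isPaddedSupport (h : #{i | p i ≠ 0} ≤ m) :
    ∃ phat : Fin m → ℝ, IsPaddedSupport p phat := by
  classical
  let e := monoEquivOfFin {i // p i ≠ 0} (Fintype.card_subtype _)
  have hf : StrictMono fun i => Fin.castLE h (e.symm i) :=
    (Fin.strictMono_castLE h).comp e.symm.strictMono
  exact ⟨Function.extend _ (fun i => p i.1) 0, _, hf, fun i => hf.injective.extend_apply _ _ _,
    fun j hj => Function.extend_apply' _ _ _ fun ⟨i, hi⟩ => hj i hi⟩

lemma IsPaddedSupport.nonneg (h : IsPaddedSupport p phat) (hp : ∀ i, 0 ≤ p i) (j : Fin m) :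
    0 ≤ phat j := by
  obtain ⟨f, -, hval, hzero⟩ := h
  by_cases hj : ∃ i, f i = j
  · obtain ⟨i, rfl⟩ := hj
    exact (hval i).symm ▸ hp i
  · exact (hzero j fun i hi => hj ⟨i, hi⟩).symm.le

lemma IsPaddedSupport.maxPartialSum_eq (h : IsPaddedSupport p phat) (k : ℕ) :
    maxPartialSum phat k = maxPartialSum p k := by
  obtain ⟨f, hf, hval, hzero⟩ := h
  refine le_antisymm
    (maxPartialSum_le_of_comp hf.injective Subtype.val_injective
      (fun j hj => hzero j fun i hi => hj ⟨i, hi⟩) hval k)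
    (maxPartialSum_le_of_comp Subtype.val_injective hf.injective (fun i hi => ?_)
      (fun a => (hval a).symm) k)
  by_contra hpi
  exact hi ⟨⟨i, hpi⟩, rfl⟩

end PaddedSupport

section Majorization

variable {m : ℕ}

lemma exists_perm_antitone (v : Fin m → ℝ) : ∃ σ : Perm (Fin m), Antitone (v ∘ σ) :=
  ⟨Tuple.sort (OrderDual.toDual ∘ v),
    monotone_toDual_comp_iff.1 (Tuple.monotone_sort (OrderDual.toDual ∘ v))⟩

lemma sum_filter_val_lt_succ (f : Fin m → ℝ) {k : ℕ} (hk : k < m) :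
    ∑ i : Fin m with i.val < k + 1, f i = ∑ i : Fin m with i.val < k, f i + f ⟨k, hk⟩ := by
  have : univ.filter (fun i : Fin m => i.val < k + 1) =
      insert ⟨k, hk⟩ (univ.filter fun i : Fin m => i.val < k) := by
    ext i
    simp only [Order.lt_add_one_iff, mem_filter, mem_univ, true_and, mem_insert, Fin.ext_iff]
    omega
  rw [this, sum_insert (by simp), add_comm]

lemma maxPartialSum_le_sum_filter_val_lt {v : Fin m → ℝ} (hv : ∀ i, 0 ≤ v i) (ha : Antitone v)
    (k : ℕ) : maxPartialSum v k ≤ ∑ i : Fin m with i.val < k, v i := by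
  refine maxPartialSum_le_iff.2 fun s hs => sum_le_sum_of_card_le_of_forall_le hv ?_ ?_
  · rw [Fin.card_filter_val_lt]
    exact le_min (by simpa using card_le_univ s) hs
  · intro i hi j hj
    simp only [mem_filter, mem_univ, true_and, not_lt] at hi hj
    exact ha (Fin.le_def.2 (by omega))

lemma sum_mul_nonneg_of_antitone {c d : Fin m → ℝ} (hc : Antitone c)
    (hd : ∀ k, 0 ≤ ∑ i : Fin m with i.val < k, d i) (htot : ∑ i, d i = 0) :
    0 ≤ ∑ i, c i * d i := by
  -- Abel summation, run as an induction on the length of the prefix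
  have key : ∀ k ≤ m, ∀ t, (∀ i : Fin m, i.val < k → t ≤ c i) →
      t * ∑ i : Fin m with i.val < k, d i ≤ ∑ i : Fin m with i.val < k, c i * d i := by
    intro k
    induction k with
    | zero => simp
    | succ k ih =>
      intro hk t ht
      have hck : ∀ i : Fin m, i.val < k → c ⟨k, hk⟩ ≤ c i :=
        fun i hi => hc (Fin.le_def.2 hi.le)
      rw [sum_filter_val_lt_succ _ hk, sum_filter_val_lt_succ _ hk]
      calc t * (∑ i : Fin m with i.val < k, d i + d ⟨k, hk⟩)
          ≤ c ⟨k, hk⟩ * (∑ i : Fin m with i.val < k, d i + d ⟨k, hk⟩) := by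
            rw [← sum_filter_val_lt_succ _ hk]
            exact mul_le_mul_of_nonneg_right (ht _ (by simp)) (hd _)
        _ ≤ _ := by
            rw [mul_add]
            exact add_le_add_left (ih ((Nat.le_succ k).trans hk) _ hck) _
  obtain ⟨t, ht⟩ := (Set.finite_range c).bddBelow
  have hall : univ.filter (fun i : Fin m => i.val < m) = univ := by ext i; simp
  simpa [hall, htot] using key m le_rfl t fun i _ => ht ⟨i, rfl⟩

lemma exists_perm_sum_mul_le_of_majorizes {a b : Fin m → ℝ} (ha : ∀ i, 0 ≤ a i)
    (hsum : ∑ i, b i = ∑ i, a i) (hmaj : Majorizes a b) (c : Fin m → ℝ) :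
    ∃ σ : Perm (Fin m), ∑ i, c i * b i ≤ ∑ i, c i * a (σ i) := by
  obtain ⟨τ, hτ⟩ := exists_perm_antitone c
  obtain ⟨ρ, hρ⟩ := exists_perm_antitone a
  refine ⟨τ.symm.trans ρ, ?_⟩
  have hcb : ∑ i, c i * b i = ∑ i, c (τ i) * b (τ i) := (Equiv.sum_comp τ _).symm
  have hca : ∑ i, c i * a (τ.symm.trans ρ i) = ∑ i, c (τ i) * a (ρ i) := by
    rw [← Equiv.sum_comp τ]
    simp
  rw [hcb, hca, ← sub_nonneg, ← sum_sub_distrib]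
  simp only [← mul_sub]
  refine sum_mul_nonneg_of_antitone (d := fun i => a (ρ i) - b (τ i)) hτ (fun k => ?_) ?_
  · rw [sum_sub_distrib, sub_nonneg]
    calc ∑ i : Fin m with i.val < k, b (τ i) ≤ maxPartialSum (b ∘ τ) k :=
          sum_le_maxPartialSum _ (Fin.card_filter_val_lt.trans_le (min_le_right _ _))
      _ = maxPartialSum b k := maxPartialSum_comp_perm b τ k
      _ ≤ maxPartialSum a k := hmaj k
      _ = maxPartialSum (a ∘ ρ) k := (maxPartialSum_comp_perm a ρ k).symm
      _ ≤ ∑ i : Fin m with i.val < k, a (ρ i) :=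
          maxPartialSum_le_sum_filter_val_lt (fun i => ha _) hρ k
  · rw [sum_sub_distrib, Equiv.sum_comp ρ, Equiv.sum_comp τ, hsum, sub_self]

lemma mem_convexHull_perm_of_majorizes {a b : Fin m → ℝ} (ha : ∀ i, 0 ≤ a i)
    (hsum : ∑ i, b i = ∑ i, a i) (hmaj : Majorizes a b) :
    b ∈ convexHull ℝ (Set.range fun σ : Perm (Fin m) => a ∘ σ) := by
  by_contra hb
  obtain ⟨f, u, hfu, hub⟩ := geometric_hahn_banach_closed_point (convex_convexHull ℝ _)
    ((Set.finite_range _).isClosed_convexHull ℝ) hb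
  set c : Fin m → ℝ := fun i => f fun j => if i = j then 1 else 0
  have hf : ∀ x, f x = ∑ i, c i * x i := fun x => by
    simpa [mul_comm] using LinearMap.pi_apply_eq_sum_univ (f : (Fin m → ℝ) →ₗ[ℝ] ℝ) x
  obtain ⟨σ, hσ⟩ := exists_perm_sum_mul_le_of_majorizes ha hsum hmaj c
  have := hfu _ (subset_convexHull ℝ _ ⟨σ, rfl⟩)
  rw [hf] at this hub
  simp only [Function.comp_apply] at this
  linarith

lemma maxPartialSum_le_of_mem_convexHull {a x : Fin m → ℝ}
    (hx : x ∈ convexHull ℝ (Set.range fun σ : Perm (Fin m) => a ∘ σ)) (k : ℕ) :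
    maxPartialSum x k ≤ maxPartialSum a k := by
  refine maxPartialSum_le_iff.2 fun s hs => ?_
  have hconv : Convex ℝ {y : Fin m → ℝ | ∑ i ∈ s, y i ≤ maxPartialSum a k} :=
    convex_halfSpace_le (𝕜 := ℝ) ⟨fun y z => sum_add_distrib, fun r y => by simp [mul_sum]⟩ _
  refine convexHull_min ?_ hconv hx
  rintro _ ⟨σ, rfl⟩
  rw [Set.mem_ofPred_eq, ← maxPartialSum_comp_perm a σ]
  exact sum_le_maxPartialSum _ hs

end Majorization

lemma image_vecMul_doublyStochastic {ι : Type*} [Fintype ι] [DecidableEq ι] (a : ι → ℝ) :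
    (a ᵥ* ·) '' (doublyStochastic ℝ ι : Set (Matrix ι ι ℝ)) =
      convexHull ℝ (Set.range fun σ : Perm ι => a ∘ σ) := by
  rw [doublyStochastic_eq_convexHull_permMatrix,
    IsLinearMap.image_convexHull ⟨fun B C => vecMul_add B C a, fun r B => vecMul_smul a r B⟩]
  congr 1
  ext x
  simp only [Set.mem_image, Set.mem_ofPred_eq, Set.mem_range, exists_exists_eq_and,
    vecMul_permMatrix]
  exact (Equiv.symm_bijective).surjective.exists

/-- `p ≽ q` iff `p` has support of size at most `m` and some `m × m`
doubly stochastic matrix `B` maps the padded vector `p̂` to `q`. -/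
theorem stmt0 {n m : ℕ} (p : Fin n → ℝ) (q : Fin m → ℝ)
    (hp : IsProbVec p) (hq : IsProbVec q) :
    Majorizes p q ↔
      ((Finset.univ.filter (fun i => p i ≠ 0)).card ≤ m ∧
        ∃ phat : Fin m → ℝ, IsPaddedSupport p phat ∧
          ∃ B : Matrix (Fin m) (Fin m) ℝ, (∀ i j, 0 ≤ B i j) ∧
            (∀ i, ∑ j, B i j = 1) ∧ (∀ j, ∑ i, B i j = 1) ∧
            Matrix.vecMul phat B = q) := by
  constructor
  · intro hmaj
    have hsupp : #{i | p i ≠ 0} ≤ m := by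
      refine card_support_le_of_sum_le_maxPartialSum hp.1 ?_
      rw [hp.2, ← hq.2, ← maxPartialSum_eq_sum hq.1 le_rfl]
      exact hmaj m
    obtain ⟨phat, hphat⟩ := exists_isPaddedSupport hsupp
    have hphat0 := hphat.nonneg hp.1
    have hsum : ∑ j, q j = ∑ j, phat j := by
      rw [hq.2, ← maxPartialSum_eq_sum hphat0 (Nat.le_add_left m n), hphat.maxPartialSum_eq,
        maxPartialSum_eq_sum hp.1 (Nat.le_add_right n m), hp.2]
    have hmaj' : Majorizes phat q := fun k => (hmaj k).trans_eq (hphat.maxPartialSum_eq k).symm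
    obtain ⟨B, hB, hBq⟩ := (image_vecMul_doublyStochastic phat).symm ▸
      mem_convexHull_perm_of_majorizes hphat0 hsum hmaj'
    obtain ⟨hB0, hBrow, hBcol⟩ := mem_doublyStochastic_iff_sum.1 hB
    exact ⟨hsupp, phat, hphat, B, hB0, hBrow, hBcol, hBq⟩
  · rintro ⟨-, phat, hphat, B, hB0, hBrow, hBcol, rfl⟩ k
    have hB : B ∈ doublyStochastic ℝ (Fin m) :=
      mem_doublyStochastic_iff_sum.2 ⟨hB0, hBrow, hBcol⟩
    rw [← hphat.maxPartialSum_eq]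
    exact maxPartialSum_le_of_mem_convexHull
      (image_vecMul_doublyStochastic phat ▸ ⟨B, hB, rfl⟩) k
end

section
/- Let 𝔻 be a monotone divergence. For p, q ∈ P(n) define λ_min(p,q) := Σ_{i∈supp(p)} q_i and λ_max(p,q) := min_{i∈supp(p)} q_i/p_i, and set 𝔻_min(p‖q) := 𝔻((1,0) ‖ (λ_min, 1−λ_min)) and 𝔻_max(p‖q) := 𝔻((1,0) ‖ (λ_max, 1−λ_max)). Then 𝔻_min and 𝔻_max are themselves monotone divergences, and for all n ∈ ℕ and all p, q ∈ P(n): 𝔻_min(p‖q) ≤ 𝔻(p‖q) ≤ 𝔻_max(p‖q). -/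
open scoped BigOperators ENNReal

/-- `λ_min(p,q) = Σ_{i ∈ supp(p)} q_i`. -/
noncomputable def lamMin {n : ℕ} (p q : Fin n → ℝ) : ℝ :=
  ∑ i ∈ Finset.univ.filter (fun i => p i ≠ 0), q i

/-- `λ_max(p,q) = min_{i ∈ supp(p)} q_i / p_i`. -/
noncomputable def lamMax {n : ℕ} (p q : Fin n → ℝ) : ℝ :=
  sInf { x | ∃ i, p i ≠ 0 ∧ x = q i / p i }

/-- `𝔻_min(p‖q) := 𝔻((1,0) ‖ (λ_min, 1 − λ_min))`. -/
noncomputable def DminOf (D : (n : ℕ) → (Fin n → ℝ) → (Fin n → ℝ) → ℝ≥0∞) :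
    (n : ℕ) → (Fin n → ℝ) → (Fin n → ℝ) → ℝ≥0∞ :=
  fun _ p q => D 2 ![1, 0] ![lamMin p q, 1 - lamMin p q]

/-- `𝔻_max(p‖q) := 𝔻((1,0) ‖ (λ_max, 1 − λ_max))`. -/
noncomputable def DmaxOf (D : (n : ℕ) → (Fin n → ℝ) → (Fin n → ℝ) → ℝ≥0∞) :
    (n : ℕ) → (Fin n → ℝ) → (Fin n → ℝ) → ℝ≥0∞ :=
  fun _ p q => D 2 ![1, 0] ![lamMax p q, 1 - lamMax p q]


/-!
Data processing sandwiches `𝔻(p‖q)` between two binary divergences. Lumping `supp p` into a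
single outcome is a channel taking `(p, q)` to `((1,0), (λ_min, 1 - λ_min))`, and since
`q - λ_max p ≥ 0`, the channel with rows `p` and `(q - λ_max p) / (1 - λ_max)` takes
`((1,0), (λ_max, 1 - λ_max))` to `(p, q)`. The same kind of channel shows that
`λ ↦ 𝔻((1,0) ‖ (λ, 1 - λ))` is antitone on `[0,1]`, while `λ_min` and `λ_max` increase under
every channel; together these make `𝔻_min` and `𝔻_max` monotone divergences.
-/

open Finset Matrix

variable {n m : ℕ}

lemma IsProbVec.exists_ne_zero {p : Fin n → ℝ} (hp : IsProbVec p) : ∃ i, p i ≠ 0 := by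
  by_contra! h
  simpa [h] using hp.2

lemma isProbVec_binary {l : ℝ} (h0 : 0 ≤ l) (h1 : l ≤ 1) : IsProbVec ![l, 1 - l] :=
  ⟨fun i => by fin_cases i <;> simpa, by simp⟩

lemma isProbVec_one_zero : IsProbVec ![(1 : ℝ), 0] := by
  simpa using isProbVec_binary zero_le_one le_rfl

lemma isProbVec_const_one : IsProbVec (fun _ : Fin 1 => (1 : ℝ)) :=
  ⟨fun _ => zero_le_one, by simp⟩

lemma le_one_of_forall_mul_le {p q : Fin n → ℝ} (hp : IsProbVec p) (hq : IsProbVec q) {c : ℝ}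
    (h : ∀ i, c * p i ≤ q i) : c ≤ 1 :=
  calc c = ∑ i, c * p i := by rw [← mul_sum, hp.2, mul_one]
    _ ≤ ∑ i, q i := sum_le_sum fun i _ => h i
    _ = 1 := hq.2

lemma relMaj_const_one {p : Fin n → ℝ} (hp : IsProbVec p) :
    RelMaj (fun _ : Fin 1 => (1 : ℝ)) (fun _ => 1) p p :=
  ⟨of fun _ => p, ⟨fun _ => hp.1, fun _ => hp.2⟩, by ext; simp [vecMul_apply_eq_sum],
    by ext; simp [vecMul_apply_eq_sum]⟩

lemma relMaj_binary_of_eq {p q r : Fin n → ℝ} (hp : IsProbVec p) (hr : IsProbVec r) {l : ℝ}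
    (hq : q = l • p + (1 - l) • r) : RelMaj ![1, 0] ![l, 1 - l] p q :=
  ⟨of ![p, r], ⟨fun i => by fin_cases i <;> simp [hp.1, hr.1], fun i => by
    fin_cases i <;> simp [hp.2, hr.2]⟩, by simp, by simp [hq]⟩

lemma relMaj_binary_of_forall_mul_le {p q : Fin n → ℝ} (hp : IsProbVec p) (hq : IsProbVec q)
    {l : ℝ} (hl : 0 ≤ l) (h : ∀ i, l * p i ≤ q i) : RelMaj ![1, 0] ![l, 1 - l] p q := by
  rcases (le_one_of_forall_mul_le hp hq h).eq_or_lt with rfl | hl1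
  · have hqp : q = p := funext fun i => ((sum_eq_sum_iff_of_le fun i _ => by simpa using h i).1
      (by rw [hp.2, hq.2]) i (mem_univ i)).symm
    exact relMaj_binary_of_eq hp hp (by simp [hqp])
  · have h1l : 0 < 1 - l := sub_pos.2 hl1
    refine relMaj_binary_of_eq hp (r := (1 - l)⁻¹ • (q - l • p))
      ⟨fun i => by simpa using mul_nonneg (inv_nonneg.2 h1l.le) (sub_nonneg.2 (h i)), ?_⟩ ?_
    · simp only [Pi.smul_apply, Pi.sub_apply, smul_eq_mul, ← mul_sum, sum_sub_distrib, hp.2,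
        hq.2]
      field_simp
    · rw [smul_smul, mul_inv_cancel₀ h1l.ne', one_smul, add_sub_cancel]

lemma relMaj_coarseGrain (s : Finset (Fin n)) {p q : Fin n → ℝ} (hp : IsProbVec p)
    (hq : IsProbVec q) :
    RelMaj p q ![∑ i ∈ s, p i, 1 - ∑ i ∈ s, p i] ![∑ i ∈ s, q i, 1 - ∑ i ∈ s, q i] := by
  set W : Matrix (Fin n) (Fin 2) ℝ :=
    of fun i => ![if i ∈ s then 1 else 0, if i ∈ s then 0 else 1]
  have hW (v : Fin n → ℝ) (hv : ∑ i, v i = 1) :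
      v ᵥ* W = ![∑ i ∈ s, v i, 1 - ∑ i ∈ s, v i] := by
    ext j
    fin_cases j <;> simp [W, vecMul_apply_eq_sum, mul_ite, sum_ite, filter_not, hv]
  refine ⟨W, ⟨fun i j => ?_, fun i => ?_⟩, hW p hp.2, hW q hq.2⟩
  · fin_cases j <;> by_cases hi : i ∈ s <;> simp [W, hi]
  · by_cases hi : i ∈ s <;> simp [W, hi]

namespace IsMonotoneDivergence

variable {D : (n : ℕ) → (Fin n → ℝ) → (Fin n → ℝ) → ℝ≥0∞}

lemma apply_self (hD : IsMonotoneDivergence D) {p : Fin n → ℝ} (hp : IsProbVec p) :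
    D n p p = 0 :=
  nonpos_iff_eq_zero.1 <| hD.normalized ▸
    hD.dpi _ _ _ _ isProbVec_const_one isProbVec_const_one hp hp (relMaj_const_one hp)

lemma antitoneOn_binary (hD : IsMonotoneDivergence D) :
    AntitoneOn (fun l => D 2 ![1, 0] ![l, 1 - l]) (Set.Icc 0 1) := by
  rintro a ⟨ha0, ha1⟩ b ⟨hb0, hb1⟩ hab
  refine hD.dpi _ _ _ _ isProbVec_one_zero (isProbVec_binary ha0 ha1) isProbVec_one_zero
    (isProbVec_binary hb0 hb1) <|
    relMaj_binary_of_forall_mul_le isProbVec_one_zero (isProbVec_binary hb0 hb1) ha0 fun i => ?_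
  fin_cases i <;> simp [hab, hb1]

theorem binary_comp (hD : IsMonotoneDivergence D)
    (lam : (n : ℕ) → (Fin n → ℝ) → (Fin n → ℝ) → ℝ)
    (hlam : ∀ n (p q : Fin n → ℝ), IsProbVec p → IsProbVec q → lam n p q ∈ Set.Icc 0 1)
    (hmono : ∀ {n m : ℕ} (p q : Fin n → ℝ) (p' q' : Fin m → ℝ),
      IsProbVec p → IsProbVec q → IsProbVec p' → IsProbVec q' →
      RelMaj p q p' q' → lam n p q ≤ lam m p' q')
    (hone : lam 1 (fun _ => 1) (fun _ => 1) = 1) :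
    IsMonotoneDivergence fun n p q => D 2 ![1, 0] ![lam n p q, 1 - lam n p q] where
  dpi p q p' q' hp hq hp' hq' h := hD.antitoneOn_binary (hlam _ _ _ hp hq) (hlam _ _ _ hp' hq')
    (hmono p q p' q' hp hq hp' hq' h)
  normalized := by
    simpa [hone] using hD.apply_self isProbVec_one_zero

end IsMonotoneDivergence

section lamMin

variable {p q : Fin n → ℝ}

lemma lamMin_mem_Icc (hq : IsProbVec q) : lamMin p q ∈ Set.Icc 0 1 :=
  ⟨sum_nonneg fun i _ => hq.1 i,
    hq.2 ▸ sum_le_sum_of_subset_of_nonneg (filter_subset _ _) fun i _ _ => hq.1 i⟩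

lemma one_sub_lamMin (hq : IsProbVec q) :
    1 - lamMin p q = ∑ i ∈ univ.filter (fun i => p i = 0), q i := by
  rw [← hq.2, ← sum_filter_add_sum_filter_not univ (fun i => p i ≠ 0)]
  simp [lamMin]

lemma relMaj_lamMin (hp : IsProbVec p) (hq : IsProbVec q) :
    RelMaj p q ![1, 0] ![lamMin p q, 1 - lamMin p q] := by
  rw [lamMin]
  simpa only [sum_filter_ne_zero, hp.2, sub_self] using
    relMaj_coarseGrain (univ.filter fun i => p i ≠ 0) hp hq

lemma eq_zero_of_vecMul_eq_zero {W : Matrix (Fin n) (Fin m) ℝ} (hp : ∀ i, 0 ≤ p i)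
    (hW : ∀ i j, 0 ≤ W i j) {i : Fin n} {j : Fin m} (hj : (p ᵥ* W) j = 0) (hi : p i ≠ 0) :
    W i j = 0 :=
  (mul_eq_zero.1 ((sum_eq_zero_iff_of_nonneg (s := univ) fun i _ =>
    mul_nonneg (hp i) (hW i j)).1 hj i (mem_univ i))).resolve_left hi

lemma lamMin_mono {p' q' : Fin m → ℝ} (hp : IsProbVec p) (hq : IsProbVec q)
    (hq' : IsProbVec q') (h : RelMaj p q p' q') : lamMin p q ≤ lamMin p' q' := by
  -- The mass `q'` puts outside `supp p'` can only come from outside `supp p`.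
  obtain ⟨W, ⟨hW0, hW1⟩, rfl, rfl⟩ := h
  set Z := univ.filter fun j => (p ᵥ* W) j = 0
  suffices ∑ j ∈ Z, (q ᵥ* W) j ≤ ∑ i ∈ univ.filter (fun i => p i = 0), q i by
    linarith [one_sub_lamMin (p := p) hq, one_sub_lamMin (p := p ᵥ* W) hq']
  calc ∑ j ∈ Z, (q ᵥ* W) j = ∑ i, q i * ∑ j ∈ Z, W i j := by
        simp only [vecMul_apply_eq_sum, mul_sum]
        exact sum_comm
    _ ≤ ∑ i, if p i = 0 then q i else 0 := sum_le_sum fun i _ => ?_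
    _ = ∑ i ∈ univ.filter (fun i => p i = 0), q i := (sum_filter _ _).symm
  split_ifs with hi
  · exact mul_le_of_le_one_right (hq.1 i) <| hW1 i ▸
      sum_le_sum_of_subset_of_nonneg (subset_univ Z) fun j _ _ => hW0 i j
  · rw [sum_eq_zero fun j hj => eq_zero_of_vecMul_eq_zero hp.1 hW0 (mem_filter.1 hj).2 hi,
      mul_zero]

end lamMin

section lamMax

variable {p q : Fin n → ℝ}

lemma le_lamMax_iff (hp : IsProbVec p) (hq : ∀ i, 0 ≤ q i) {c : ℝ} :
    c ≤ lamMax p q ↔ ∀ i, c * p i ≤ q i := by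
  have hfin : {x | ∃ i, p i ≠ 0 ∧ x = q i / p i}.Finite :=
    (Set.finite_range fun i => q i / p i).subset fun x ⟨i, _, hx⟩ => ⟨i, hx.symm⟩
  constructor
  · intro hc i
    rcases (hp.1 i).eq_or_lt with hi | hi
    · simpa [← hi] using hq i
    · exact (le_div_iff₀ hi).1 <| hc.trans <| csInf_le hfin.bddBelow ⟨i, hi.ne', rfl⟩
  · intro hc
    obtain ⟨i, hi⟩ := hp.exists_ne_zero
    refine le_csInf ⟨_, i, hi, rfl⟩ ?_
    rintro _ ⟨i, hi, rfl⟩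
    exact (le_div_iff₀ ((hp.1 i).lt_of_ne' hi)).2 (hc i)

lemma lamMax_mul_le (hp : IsProbVec p) (hq : IsProbVec q) (i : Fin n) :
    lamMax p q * p i ≤ q i :=
  (le_lamMax_iff hp hq.1).1 le_rfl i

lemma lamMax_mem_Icc (hp : IsProbVec p) (hq : IsProbVec q) : lamMax p q ∈ Set.Icc 0 1 :=
  ⟨(le_lamMax_iff hp hq.1).2 fun i => by simpa using hq.1 i,
    le_one_of_forall_mul_le hp hq (lamMax_mul_le hp hq)⟩

lemma relMaj_lamMax (hp : IsProbVec p) (hq : IsProbVec q) :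
    RelMaj ![1, 0] ![lamMax p q, 1 - lamMax p q] p q :=
  relMaj_binary_of_forall_mul_le hp hq (lamMax_mem_Icc hp hq).1 (lamMax_mul_le hp hq)

lemma lamMax_mono {p' q' : Fin m → ℝ} (hp : IsProbVec p) (hq : IsProbVec q)
    (hp' : IsProbVec p') (hq' : IsProbVec q') (h : RelMaj p q p' q') :
    lamMax p q ≤ lamMax p' q' := by
  obtain ⟨W, ⟨hW0, -⟩, rfl, rfl⟩ := h
  refine (le_lamMax_iff hp' hq'.1).2 fun j => ?_
  simp only [vecMul_apply_eq_sum, mul_sum, ← mul_assoc]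
  exact sum_le_sum fun i _ => mul_le_mul_of_nonneg_right (lamMax_mul_le hp hq i) (hW0 i j)

lemma lamMax_const_one : lamMax (fun _ : Fin 1 => (1 : ℝ)) (fun _ => 1) = 1 :=
  le_antisymm (lamMax_mem_Icc isProbVec_const_one isProbVec_const_one).2 <|
    (le_lamMax_iff isProbVec_const_one fun _ => zero_le_one).2 fun _ => (one_mul _).le

end lamMax

/-- `𝔻_min` and `𝔻_max` are monotone divergences, and
`𝔻_min(p‖q) ≤ 𝔻(p‖q) ≤ 𝔻_max(p‖q)` for all probability vectors. -/
theorem stmt2 (D : (n : ℕ) → (Fin n → ℝ) → (Fin n → ℝ) → ℝ≥0∞)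
    (hD : IsMonotoneDivergence D) :
    IsMonotoneDivergence (DminOf D) ∧ IsMonotoneDivergence (DmaxOf D) ∧
    ∀ (n : ℕ) (p q : Fin n → ℝ), IsProbVec p → IsProbVec q →
      DminOf D n p q ≤ D n p q ∧ D n p q ≤ DmaxOf D n p q := by
  refine ⟨?_, ?_, fun n p q hp hq => ⟨?_, ?_⟩⟩
  · exact hD.binary_comp (fun _ => lamMin) (fun _ _ _ _ hq => lamMin_mem_Icc hq)
      (fun _ _ _ _ hp hq _ hq' h => lamMin_mono hp hq hq' h) (by simp [lamMin])
  · exact hD.binary_comp (fun _ => lamMax) (fun _ _ _ => lamMax_mem_Icc)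
      (fun _ _ _ _ => lamMax_mono) lamMax_const_one
  · have hmin := lamMin_mem_Icc (p := p) hq
    exact hD.dpi _ _ _ _ hp hq isProbVec_one_zero (isProbVec_binary hmin.1 hmin.2)
      (relMaj_lamMin hp hq)
  · have hmax := lamMax_mem_Icc hp hq
    exact hD.dpi _ _ _ _ isProbVec_one_zero (isProbVec_binary hmax.1 hmax.2) hp hq
      (relMaj_lamMax hp hq)
end

section
/- Let 𝔻 be a relative entropy. Then for every n ∈ ℕ, every probability vector p ∈ P(n), and every x ∈ [n]: 𝔻(e_x ‖ p) = −log p_x, where e_x ∈ P(n) is the deterministic vector with all mass on index x (with the convention −log 0 = +∞). -/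
open scoped BigOperators ENNReal

/-!
Data processing in both directions shows that `𝔻(e_x ‖ p)` depends only on `p_x`: it equals
`g(p_x)` with `g(t) = 𝔻((1,0) ‖ (t,1-t))`. Data processing makes `g` antitone on `[0,1]`,
additivity on Kronecker products gives `g(st) = g(s) + g(t)`, and the normalisation gives
`g(1/2) = 1`. Hence `g((1/2)^m) = m`, so `g(0) = ∞`; and for `0 < t ≤ 1`, squeezing `t^k`
between consecutive powers of `1/2` gives `|k g(t) + k log t| ≤ 1` for every `k`,
i.e. `g(t) = -log t`.
-/

namespace IsProbVec

variable {n m : ℕ} {p : Fin n → ℝ}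

theorem le_one (hp : IsProbVec p) (x : Fin n) : p x ≤ 1 :=
  hp.2 ▸ Finset.single_le_sum (fun i _ => hp.1 i) (Finset.mem_univ x)

theorem eq_single_of_one_le (hp : IsProbVec p) {x : Fin n} (hx : 1 ≤ p x) :
    p = Pi.single x 1 := by
  have hrest : ∑ i ∈ Finset.univ.erase x, p i = 0 := by
    linarith [Finset.add_sum_erase Finset.univ p (Finset.mem_univ x), hp.2,
      Finset.sum_nonneg fun i (_ : i ∈ Finset.univ.erase x) => hp.1 i]
  ext j
  rcases eq_or_ne j x with rfl | hj
  · simp [le_antisymm (hp.le_one j) hx]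
  · rw [Pi.single_eq_of_ne hj]
    exact (Finset.sum_eq_zero_iff_of_nonneg fun i _ => hp.1 i).1 hrest j
      (Finset.mem_erase.2 ⟨hj, Finset.mem_univ j⟩)

theorem single (x : Fin n) : IsProbVec (Pi.single x 1 : Fin n → ℝ) :=
  ⟨fun i => by rw [Pi.single_apply]; positivity, by simp⟩

theorem pair {t : ℝ} (ht : t ∈ Set.Icc 0 1) : IsProbVec ![t, 1 - t] :=
  ⟨Fin.forall_fin_two.2 ⟨ht.1, sub_nonneg.2 ht.2⟩, by simp⟩

theorem one_zero : IsProbVec (![1, 0] : Fin 2 → ℝ) := by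
  simpa using pair (t := 1) ⟨zero_le_one, le_rfl⟩

theorem kron {q : Fin m → ℝ} (hp : IsProbVec p) (hq : IsProbVec q) :
    IsProbVec (_root_.kron p q) := by
  refine ⟨fun i => mul_nonneg (hp.1 _) (hq.1 _), ?_⟩
  rw [← finProdFinEquiv.sum_comp, Fintype.sum_prod_type]
  simp [_root_.kron, ← Finset.mul_sum, hp.2, hq.2]

end IsProbVec

theorem vec_one_zero_eq_single : (![1, 0] : Fin 2 → ℝ) = Pi.single 0 1 := by
  ext j; fin_cases j <;> simp

theorem kron_finProdFinEquiv {n m : ℕ} (p : Fin n → ℝ) (q : Fin m → ℝ) (i : Fin n)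
    (j : Fin m) : kron p q (finProdFinEquiv (i, j)) = p i * q j := by
  simp [kron]

theorem kron_single_one {n m : ℕ} (x : Fin n) (y : Fin m) :
    kron (Pi.single x 1 : Fin n → ℝ) (Pi.single y 1) =
      Pi.single (finProdFinEquiv (x, y)) 1 := by
  ext k
  obtain ⟨⟨i, j⟩, rfl⟩ := finProdFinEquiv.surjective k
  by_cases i = x <;> by_cases j = y <;> simp [kron_finProdFinEquiv, *]

section Channels

variable {n : ℕ} {p : Fin n → ℝ}

theorem relMaj_single_pair (hp : IsProbVec p) (x : Fin n) :
    RelMaj (Pi.single x 1) p ![1, 0] ![p x, 1 - p x] := by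
  set e : Fin n → ℝ := Pi.single x 1
  refine ⟨fun i => ![e i, 1 - e i], ⟨fun i => ?_, fun i => by simp⟩, ?_, ?_⟩
  · simpa [Fin.forall_fin_two] using ⟨(IsProbVec.single x).1 i, (IsProbVec.single x).le_one i⟩
  · ext j; fin_cases j <;> simp [Matrix.vecMul, e]
  · ext j; fin_cases j
    · simp [Matrix.vecMul, e]
    · change p ⬝ᵥ (1 - e) = 1 - p x
      rw [dotProduct_sub, dotProduct_one, dotProduct_single, hp.2, mul_one]

theorem relMaj_pair_single_of_le (hp : IsProbVec p) {x : Fin n} {t : ℝ} (ht : t ≤ p x) :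
    RelMaj ![1, 0] ![t, 1 - t] (Pi.single x 1) p := by
  set e : Fin n → ℝ := Pi.single x 1
  rcases (ht.trans (hp.le_one x)).lt_or_eq with ht1 | rfl
  · have hpos : 0 < 1 - t := sub_pos.2 ht1
    have hrest : ∀ j, 0 ≤ p j - t * e j := fun j => by
      rcases eq_or_ne j x with rfl | hj
      · simpa [e] using ht
      · simpa [e, Pi.single_eq_of_ne hj] using hp.1 j
    refine ⟨Matrix.of ![e, (1 - t)⁻¹ • (p - t • e)], ⟨?_, ?_⟩, by simp, ?_⟩
    · simpa [Fin.forall_fin_two] using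
        ⟨(IsProbVec.single x).1, fun j => mul_nonneg (inv_nonneg.2 hpos.le) (hrest j)⟩
    · simp [Fin.forall_fin_two, e, ← Finset.mul_sum, Finset.sum_sub_distrib, hp.2, hpos.ne']
    · simp [smul_smul, hpos.ne']
  · refine ⟨Matrix.of ![e, e], ⟨?_, ?_⟩, by simp, ?_⟩
    · simpa [Fin.forall_fin_two] using (IsProbVec.single x).1
    · simp [Fin.forall_fin_two, e]
    · simp [hp.eq_single_of_one_le ht, e]

end Channels

theorem eq_of_forall_natCast_mul_abs_sub_le_one {a b : ℝ} (h : ∀ k : ℕ, k * |a - b| ≤ 1) :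
    a = b := by
  by_contra hne
  have hpos : 0 < |a - b| := abs_pos.2 (sub_ne_zero.2 hne)
  obtain ⟨k, hk⟩ := exists_nat_gt |a - b|⁻¹
  linarith [h k, (inv_lt_iff_one_lt_mul₀ hpos).1 hk]

theorem half_pow_le_pow_iff {t : ℝ} (ht : 0 < t) (k m : ℕ) :
    (1 / 2 : ℝ) ^ m ≤ t ^ k ↔ k * -Real.logb 2 t ≤ m := by
  rw [← Real.logb_le_logb one_lt_two (by positivity) (by positivity), Real.logb_pow,
    Real.logb_pow, one_div, Real.logb_inv, Real.logb_self_eq_one one_lt_two]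
  constructor <;> intro h <;> linarith

theorem pow_le_half_pow_iff {t : ℝ} (ht : 0 < t) (k m : ℕ) :
    t ^ k ≤ (1 / 2 : ℝ) ^ m ↔ m ≤ k * -Real.logb 2 t := by
  rw [← Real.logb_le_logb one_lt_two (by positivity) (by positivity), Real.logb_pow,
    Real.logb_pow, one_div, Real.logb_inv, Real.logb_self_eq_one one_lt_two]
  constructor <;> intro h <;> linarith

structure IsSurprisal (f : ℝ → ℝ≥0∞) : Prop where
  antitoneOn : AntitoneOn f (Set.Icc 0 1)
  map_mul : ∀ s ∈ Set.Icc (0 : ℝ) 1, ∀ t ∈ Set.Icc (0 : ℝ) 1, f (s * t) = f s + f t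
  map_half : f (1 / 2) = 1

namespace IsSurprisal

variable {f : ℝ → ℝ≥0∞} {t : ℝ}

theorem map_one (hf : IsSurprisal f) : f 1 = 0 := by
  have hmem : (1 : ℝ) ∈ Set.Icc 0 1 := ⟨zero_le_one, le_rfl⟩
  have hfin : f 1 ≠ ⊤ := ne_top_of_le_ne_top ENNReal.one_ne_top <|
    hf.map_half ▸ hf.antitoneOn ⟨by norm_num, by norm_num⟩ hmem (by norm_num)
  have h := hf.map_mul 1 hmem 1 hmem
  rw [mul_one] at h
  exact (ENNReal.add_right_inj hfin).1 (h.symm.trans (add_zero _).symm)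

theorem map_pow (hf : IsSurprisal f) (ht : t ∈ Set.Icc 0 1) (k : ℕ) :
    f (t ^ k) = k * f t := by
  induction k with
  | zero => simp [hf.map_one]
  | succ k ih =>
    rw [pow_succ, hf.map_mul _ ⟨pow_nonneg ht.1 k, pow_le_one₀ ht.1 ht.2⟩ t ht, ih]
    push_cast
    ring

theorem map_half_pow (hf : IsSurprisal f) (m : ℕ) : f ((1 / 2) ^ m) = m := by
  rw [hf.map_pow ⟨by norm_num, by norm_num⟩, hf.map_half, mul_one]

theorem map_zero (hf : IsSurprisal f) : f 0 = ⊤ := by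
  refine top_unique (ENNReal.iSup_natCast ▸ iSup_le fun m => ?_)
  rw [← hf.map_half_pow m]
  exact hf.antitoneOn ⟨le_rfl, zero_le_one⟩
    ⟨by positivity, pow_le_one₀ (by norm_num) (by norm_num)⟩ (by positivity)

theorem natCast_mul_le (hf : IsSurprisal f) (ht0 : 0 < t) (ht1 : t ≤ 1) {k m : ℕ}
    (h : k * -Real.logb 2 t ≤ m) : k * f t ≤ m := by
  rw [← hf.map_pow ⟨ht0.le, ht1⟩, ← hf.map_half_pow]
  exact hf.antitoneOn ⟨by positivity, pow_le_one₀ (by norm_num) (by norm_num)⟩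
    ⟨pow_nonneg ht0.le k, pow_le_one₀ ht0.le ht1⟩ ((half_pow_le_pow_iff ht0 k m).2 h)

theorem le_natCast_mul (hf : IsSurprisal f) (ht0 : 0 < t) (ht1 : t ≤ 1) {k m : ℕ}
    (h : m ≤ k * -Real.logb 2 t) : (m : ℝ≥0∞) ≤ k * f t := by
  rw [← hf.map_pow ⟨ht0.le, ht1⟩, ← hf.map_half_pow]
  exact hf.antitoneOn ⟨pow_nonneg ht0.le k, pow_le_one₀ ht0.le ht1⟩
    ⟨by positivity, pow_le_one₀ (by norm_num) (by norm_num)⟩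
    ((pow_le_half_pow_iff ht0 k m).2 h)

theorem map_ne_top (hf : IsSurprisal f) (ht0 : 0 < t) (ht1 : t ≤ 1) : f t ≠ ⊤ := by
  have h := hf.natCast_mul_le ht0 ht1 (k := 1) (m := ⌈-Real.logb 2 t⌉₊)
    (by simpa using Nat.le_ceil _)
  rw [Nat.cast_one, one_mul] at h
  exact ne_top_of_le_ne_top (ENNReal.natCast_ne_top _) h

theorem eq_ofReal_neg_logb (hf : IsSurprisal f) (ht0 : 0 < t) (ht1 : t ≤ 1) :
    f t = ENNReal.ofReal (-Real.logb 2 t) := by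
  have hfin := hf.map_ne_top ht0 ht1
  rw [← ENNReal.ofReal_toReal hfin]
  congr 1
  refine eq_of_forall_natCast_mul_abs_sub_le_one fun k => ?_
  have hkL : 0 ≤ k * -Real.logb 2 t :=
    mul_nonneg k.cast_nonneg (neg_nonneg.2 (Real.logb_nonpos one_lt_two ht0.le ht1))
  have hup : k * (f t).toReal ≤ ⌈k * -Real.logb 2 t⌉₊ := by
    simpa using ENNReal.toReal_mono (ENNReal.natCast_ne_top _)
      (hf.natCast_mul_le ht0 ht1 (Nat.le_ceil _))
  have hlow : (⌊k * -Real.logb 2 t⌋₊ : ℝ) ≤ k * (f t).toReal := by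
    simpa using ENNReal.toReal_mono (ENNReal.mul_ne_top (ENNReal.natCast_ne_top k) hfin)
      (hf.le_natCast_mul ht0 ht1 (Nat.floor_le hkL))
  rw [← Nat.abs_cast k, ← abs_mul, mul_sub, abs_sub_le_iff]
  constructor <;>
    linarith [Nat.ceil_lt_add_one hkL, Nat.lt_floor_add_one (k * -Real.logb 2 t)]

end IsSurprisal

noncomputable def pointDivergence (D : (n : ℕ) → (Fin n → ℝ) → (Fin n → ℝ) → ℝ≥0∞)
    (t : ℝ) : ℝ≥0∞ :=
  D 2 ![1, 0] ![t, 1 - t]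

namespace IsRelativeEntropy

variable {D : (n : ℕ) → (Fin n → ℝ) → (Fin n → ℝ) → ℝ≥0∞}

theorem apply_single_eq (hD : IsRelativeEntropy D) {n : ℕ} {p : Fin n → ℝ} (hp : IsProbVec p)
    (x : Fin n) : D n (Pi.single x 1) p = pointDivergence D (p x) := by
  have hpair := IsProbVec.pair ⟨hp.1 x, hp.le_one x⟩
  exact le_antisymm
    (hD.dpi _ _ _ _ .one_zero hpair (.single x) hp (relMaj_pair_single_of_le hp le_rfl))
    (hD.dpi _ _ _ _ (.single x) hp .one_zero hpair (relMaj_single_pair hp x))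

theorem isSurprisal_pointDivergence (hD : IsRelativeEntropy D) :
    IsSurprisal (pointDivergence D) where
  antitoneOn t ht s hs hts := by
    have hs' := hD.apply_single_eq (IsProbVec.pair hs) 0
    simp only [Matrix.cons_val_zero] at hs'
    exact hs' ▸ hD.dpi _ _ _ _ .one_zero (.pair ht) (.single 0) (.pair hs)
      (relMaj_pair_single_of_le (.pair hs) hts)
  map_mul s hs t ht := by
    have hadd := hD.additive _ _ _ _ .one_zero (.pair hs) .one_zero (.pair ht)
    have hkron : kron ![1, 0] ![1, 0] = Pi.single (finProdFinEquiv (0, 0)) (1 : ℝ) :=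
      vec_one_zero_eq_single ▸ kron_single_one 0 0
    rwa [hkron, hD.apply_single_eq ((IsProbVec.pair hs).kron (.pair ht)),
      kron_finProdFinEquiv, Matrix.cons_val_zero, Matrix.cons_val_zero] at hadd
  map_half := by
    rw [pointDivergence, show (1 : ℝ) - 1 / 2 = 1 / 2 by norm_num, hD.normalized,
      Real.logb_self_eq_one one_lt_two, ENNReal.ofReal_one]

end IsRelativeEntropy

/-- for a relative entropy `𝔻`, `𝔻(e_x ‖ p) = −log p_x`
(binary logarithm, with `−log 0 = +∞`). -/
theorem stmt3 (D : (n : ℕ) → (Fin n → ℝ) → (Fin n → ℝ) → ℝ≥0∞)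
    (hD : IsRelativeEntropy D) (n : ℕ) (p : Fin n → ℝ) (hp : IsProbVec p) (x : Fin n) :
    D n (fun j => if j = x then 1 else 0) p =
      if p x = 0 then ⊤ else ENNReal.ofReal (-(Real.logb 2 (p x))) := by
  have hsingle : (fun j => if j = x then (1 : ℝ) else 0) = Pi.single x 1 := by
    ext j
    simp [Pi.single_apply]
  rw [hsingle, hD.apply_single_eq hp x]
  have hf := hD.isSurprisal_pointDivergence
  split_ifs with hx
  · exact hx ▸ hf.map_zero
  · exact hf.eq_ofReal_neg_logb ((hp.1 x).lt_of_ne' hx) (hp.le_one x)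
end

section
/- Let 𝔻 be a relative entropy. Then for all n ∈ ℕ and all p, q ∈ P(n): D_min(p‖q) ≤ 𝔻(p‖q) ≤ D_max(p‖q), where D_min(p‖q) = −log Σ_{i∈supp(p)} q_i and D_max(p‖q) = log max_{i∈[n]} p_i/q_i (with the conventions 0/0 = 0 and x/0 = +∞ for x > 0). -/
open scoped BigOperators ENNReal

/-- The min-relative entropy `D_min(p‖q) = −log Σ_{i ∈ supp(p)} q_i`
(binary logarithm, with `−log 0 = +∞`). -/
noncomputable def DminR {n : ℕ} (p q : Fin n → ℝ) : ℝ≥0∞ :=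
  if (∑ i ∈ Finset.univ.filter (fun i => p i ≠ 0), q i) = 0 then ⊤
  else ENNReal.ofReal (-(Real.logb 2 (∑ i ∈ Finset.univ.filter (fun i => p i ≠ 0), q i)))

/-- The max-relative entropy `D_max(p‖q) = log max_i p_i/q_i`
(binary logarithm, with the conventions `0/0 = 0` and `x/0 = ∞` for `x > 0`). -/
noncomputable def DmaxR {n : ℕ} (p q : Fin n → ℝ) : ℝ≥0∞ :=
  if (⨆ i, ENNReal.ofReal (p i) / ENNReal.ofReal (q i)) = ⊤ then ⊤
  else ENNReal.ofReal
    (Real.logb 2 (⨆ i, ENNReal.ofReal (p i) / ENNReal.ofReal (q i)).toReal)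

section AuxRelEnt

open Finset

lemma probVec_one' : IsProbVec (fun _ : Fin 1 => (1:ℝ)) :=
  ⟨fun _ => zero_le_one, by simp⟩

lemma probVec_pair' {s : ℝ} (h0 : 0 ≤ s) (h1 : s ≤ 1) : IsProbVec ![s, 1-s] := by
  constructor
  · intro i; fin_cases i
    · simpa using h0
    · simpa using by linarith
  · simp [Fin.sum_univ_two]

lemma probVec_b' : IsProbVec ![(1:ℝ), 0] := by
  constructor
  · intro i; fin_cases i <;> norm_num
  · simp [Fin.sum_univ_two]

lemma probVec_u' : IsProbVec ![(1:ℝ)/2, 1/2] := by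
  constructor
  · intro i; fin_cases i <;> norm_num
  · norm_num [Fin.sum_univ_two]

lemma b_eval' : ∀ j : Fin 2, ![(1:ℝ),0] j = if j = 0 then 1 else 0 := by
  intro j; fin_cases j <;> simp

lemma probVec_kron' {n m : ℕ} {p : Fin n → ℝ} {q : Fin m → ℝ}
    (hp : IsProbVec p) (hq : IsProbVec q) : IsProbVec (kron p q) := by
  constructor
  · intro i; exact mul_nonneg (hp.1 _) (hq.1 _)
  · rw [← Equiv.sum_comp finProdFinEquiv (fun i => kron p q i)]
    simp only [kron, Equiv.symm_apply_apply]
    rw [Fintype.sum_prod_type, ← Finset.sum_mul_sum, hp.2, hq.2, one_mul]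

lemma D_one' (D : (n : ℕ) → (Fin n → ℝ) → (Fin n → ℝ) → ℝ≥0∞)
    (hD : IsRelativeEntropy D) : D 1 (fun _ => 1) (fun _ => 1) = 0 := by
  have hfin : D 1 (fun _ => 1) (fun _ => 1) ≤ ENNReal.ofReal (Real.logb 2 2) := by
    rw [← hD.normalized]
    apply hD.dpi _ _ _ _ probVec_b' probVec_u' probVec_one' probVec_one'
    refine ⟨fun _ _ => 1, ⟨fun _ _ => zero_le_one, fun i => by simp⟩, ?_, ?_⟩
    · funext j; simp [Matrix.vecMul, dotProduct, Fin.sum_univ_two]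
    · funext j; norm_num [Matrix.vecMul, dotProduct, Fin.sum_univ_two]
  have hne : D 1 (fun _ => 1) (fun _ => 1) ≠ ⊤ :=
    ne_top_of_le_ne_top ENNReal.ofReal_ne_top hfin
  have hk : kron (fun _ : Fin 1 => (1:ℝ)) (fun _ : Fin 1 => (1:ℝ)) = (fun _ : Fin 1 => (1:ℝ)) := by
    funext i; simp [kron]
  have h2 := hD.additive (fun _ : Fin 1 => (1:ℝ)) (fun _ => 1) (fun _ => 1) (fun _ => 1)
    probVec_one' probVec_one' probVec_one' probVec_one'
  rw [hk] at h2
  have h3 : D 1 (fun _ => 1) (fun _ => 1) + 0 = D 1 (fun _ => 1) (fun _ => 1) + D 1 (fun _ => 1) (fun _ => 1) := by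
    rw [add_zero]; exact h2
  exact ((ENNReal.add_right_inj hne).1 h3).symm

/-- If `p` and `p'` are point masses and `q i0 ≤ q' j0`, `q i0 < 1`,
then `(p,q)` relatively majorises `(p',q')`. -/
lemma pointMaj' {n m : ℕ} {p q : Fin n → ℝ} {p' q' : Fin m → ℝ} {i0 : Fin n} {j0 : Fin m}
    (hq : IsProbVec q) (hq' : IsProbVec q')
    (hp : ∀ i, p i = if i = i0 then 1 else 0) (hp' : ∀ j, p' j = if j = j0 then 1 else 0)
    (hle : q i0 ≤ q' j0) (hlt : q i0 < 1) : RelMaj p q p' q' := by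
  have hd : (0:ℝ) < 1 - q i0 := by linarith
  refine ⟨fun i j => if i = i0 then (if j = j0 then 1 else 0)
      else (q' j - (if j = j0 then q i0 else 0)) / (1 - q i0), ⟨?_, ?_⟩, ?_, ?_⟩
  · intro i j
    by_cases hi : i = i0
    · simp only [hi, if_pos]
      split <;> norm_num
    · dsimp only
      rw [if_neg hi]
      apply div_nonneg _ hd.le
      by_cases hj : j = j0
      · subst hj; rw [if_pos rfl]; linarith
      · rw [if_neg hj]; linarith [hq'.1 j]
  · intro i
    by_cases hi : i = i0
    · simp [hi]
    · simp only [hi, if_false]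
      rw [← Finset.sum_div, Finset.sum_sub_distrib, hq'.2, Finset.sum_ite_eq']
      simp [div_self hd.ne']
  · funext j
    simp only [Matrix.vecMul, dotProduct]
    have : ∀ i : Fin n, p i * (if i = i0 then (if j = j0 then 1 else 0)
        else (q' j - (if j = j0 then q i0 else 0)) / (1 - q i0))
        = if i = i0 then (if j = j0 then 1 else 0) else 0 := by
      intro i; rw [hp i]; by_cases hi : i = i0 <;> simp [hi]
    rw [Finset.sum_congr rfl (fun i _ => this i), Finset.sum_ite_eq', if_pos (Finset.mem_univ i0),
      hp' j]
  · funext j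
    simp only [Matrix.vecMul, dotProduct]
    rw [← Finset.add_sum_erase _ _ (Finset.mem_univ i0)]
    have herase : ∀ i ∈ Finset.univ.erase i0,
        q i * (if i = i0 then (if j = j0 then 1 else 0)
          else (q' j - (if j = j0 then q i0 else 0)) / (1 - q i0))
        = q i * ((q' j - (if j = j0 then q i0 else 0)) / (1 - q i0)) := by
      intro i hi
      rw [if_neg (Finset.ne_of_mem_erase hi)]
    rw [Finset.sum_congr rfl herase, ← Finset.sum_mul,
      Finset.sum_erase_eq_sub (Finset.mem_univ i0), hq.2, if_pos rfl]
    rw [mul_comm (1 - q i0) _, div_mul_cancel₀ _ hd.ne']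
    split <;> ring

/-- reduction to a binary pair recording the support weight. -/
lemma L3low' {n : ℕ} {p q : Fin n → ℝ} (hp : IsProbVec p) (hq : IsProbVec q) :
    RelMaj p q ![(1:ℝ), 0]
      ![∑ i ∈ Finset.univ.filter (fun i => p i ≠ 0), q i,
        1 - ∑ i ∈ Finset.univ.filter (fun i => p i ≠ 0), q i] := by
  set s := ∑ i ∈ Finset.univ.filter (fun i => p i ≠ 0), q i with hs
  refine ⟨fun i j => if j = 0 then (if p i = 0 then 0 else 1) else (if p i = 0 then 1 else 0),
    ⟨?_, ?_⟩, ?_, ?_⟩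
  · intro i j; by_cases h1 : j = 0 <;> by_cases h2 : p i = 0 <;> simp [h1, h2]
  · intro i
    rw [Fin.sum_univ_two]
    by_cases h2 : p i = 0 <;> simp [h2]
  · have h0 : (∑ x, p x * if (0:Fin 2) = 0 then (if p x = 0 then (0:ℝ) else 1) else (if p x = 0 then 1 else 0)) = 1 := by
      have e : (∑ x, p x * if (0:Fin 2) = 0 then (if p x = 0 then (0:ℝ) else 1) else (if p x = 0 then 1 else 0)) = ∑ x, p x :=
        Finset.sum_congr rfl (fun i _ => by by_cases h : p i = 0 <;> simp [h])
      rw [e, hp.2]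
    have h1 : (∑ x, p x * if (1:Fin 2) = 0 then (if p x = 0 then (0:ℝ) else 1) else (if p x = 0 then 1 else 0)) = 0 := by
      apply Finset.sum_eq_zero
      intro i _
      by_cases h : p i = 0 <;> simp [h]
    funext j
    simp only [Matrix.vecMul, dotProduct]
    fin_cases j
    · simpa using h0
    · simpa using h1
  · have h0 : (∑ x, q x * if (0:Fin 2) = 0 then (if p x = 0 then (0:ℝ) else 1) else (if p x = 0 then 1 else 0)) = s := by
      rw [hs, Finset.sum_filter]
      apply Finset.sum_congr rfl
      intro i _
      by_cases h : p i = 0 <;> simp [h]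
    have h1 : (∑ x, q x * if (1:Fin 2) = 0 then (if p x = 0 then (0:ℝ) else 1) else (if p x = 0 then 1 else 0)) = 1 - s := by
      have key : ∀ i ∈ Finset.univ, q i * (if (1:Fin 2) = 0 then (if p i = 0 then (0:ℝ) else 1) else (if p i = 0 then 1 else 0)) = q i - (if p i ≠ 0 then q i else 0) := by
        intro i _; by_cases h : p i = 0 <;> simp [h]
      rw [Finset.sum_congr rfl key, Finset.sum_sub_distrib, hq.2, ← Finset.sum_filter, ← hs]
    funext j
    simp only [Matrix.vecMul, dotProduct]
    fin_cases j
    · simpa using h0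
    · simpa using h1

/-- reduction for the upper bound. -/
lemma L3up' {n : ℕ} {p q : Fin n → ℝ} {t : ℝ} (hp : IsProbVec p) (hq : IsProbVec q)
    (ht0 : 0 < t) (ht1 : t ≤ 1) (hle : ∀ i, t * p i ≤ q i) :
    RelMaj ![(1:ℝ), 0] ![t, 1-t] p q := by
  rcases eq_or_lt_of_le ht1 with h1 | h1
  · -- t = 1, hence p = q
    have hpq : ∀ i, p i = q i := by
      have hle' : ∀ i ∈ Finset.univ, p i ≤ q i := fun i _ => by
        have h2 := hle i; rw [h1, one_mul] at h2; exact h2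
      have hsum : ∑ i, p i = ∑ i, q i := by rw [hp.2, hq.2]
      exact fun i => (Finset.sum_eq_sum_iff_of_le hle').1 hsum i (Finset.mem_univ i)
    refine ⟨fun _ j => p j, ⟨fun _ j => hp.1 j, fun _ => hp.2⟩, ?_, ?_⟩
    · funext j
      simp [Matrix.vecMul, dotProduct, Fin.sum_univ_two]
    · funext j
      simp only [Matrix.vecMul, dotProduct, Fin.sum_univ_two]
      rw [← hpq j]
      norm_num
      ring
  · have hd : (0:ℝ) < 1 - t := by linarith
    refine ⟨fun i j => if i = 0 then p j else (q j - t * p j)/(1-t), ⟨?_, ?_⟩, ?_, ?_⟩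
    · intro i j
      dsimp only
      split
      · exact hp.1 j
      · exact div_nonneg (by linarith [hle j]) hd.le
    · intro i
      dsimp only
      split
      · exact hp.2
      · rw [← Finset.sum_div, Finset.sum_sub_distrib, ← Finset.mul_sum, hp.2, hq.2,
          mul_one, div_self hd.ne']
    · funext j
      simp [Matrix.vecMul, dotProduct, Fin.sum_univ_two]
    · funext j
      simp only [Matrix.vecMul, dotProduct, Fin.sum_univ_two]
      norm_num
      rw [mul_comm (1-t) _, div_mul_cancel₀ _ hd.ne']
      ring

/-- Tensor powers of a binary pair `(e₁, c)`, done existentially. -/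
lemma TENS' (D : (n : ℕ) → (Fin n → ℝ) → (Fin n → ℝ) → ℝ≥0∞) (hD : IsRelativeEntropy D)
    (c : Fin 2 → ℝ) (hc : IsProbVec c) (k : ℕ) :
    ∃ (N : ℕ) (P Q : Fin N → ℝ) (i0 : Fin N), IsProbVec P ∧ IsProbVec Q ∧
      (∀ i, P i = if i = i0 then 1 else 0) ∧ Q i0 = (c 0)^k ∧
      D N P Q = (k : ℝ≥0∞) * D 2 ![1,0] c := by
  induction k with
  | zero =>
    refine ⟨1, fun _ => 1, fun _ => 1, 0, probVec_one', probVec_one', ?_, by simp,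
      by rw [D_one' D hD]; simp⟩
    intro i
    simp [Subsingleton.elim i 0]
  | succ k ih =>
    obtain ⟨N, P, Q, i0, hP, hQ, hpt, hQv, hDv⟩ := ih
    refine ⟨N * 2, kron P ![1,0], kron Q c, finProdFinEquiv (i0, 0),
      probVec_kron' hP probVec_b', probVec_kron' hQ hc, ?_, ?_, ?_⟩
    · intro i
      show P (finProdFinEquiv.symm i).1 * ![(1:ℝ),0] (finProdFinEquiv.symm i).2 = _
      rw [hpt, b_eval']
      by_cases h : i = finProdFinEquiv (i0, 0)
      · rw [if_pos h, h, Equiv.symm_apply_apply]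
        simp
      · rw [if_neg h]
        by_cases h1 : (finProdFinEquiv.symm i).1 = i0
        · have h2 : (finProdFinEquiv.symm i).2 ≠ 0 := by
            intro h2
            apply h
            have e : finProdFinEquiv.symm i = (i0, 0) := Prod.ext h1 h2
            rw [← e, Equiv.apply_symm_apply]
          rw [if_neg h2]; ring
        · rw [if_neg h1]; ring
    · show Q (finProdFinEquiv.symm (finProdFinEquiv (i0,0))).1
          * c (finProdFinEquiv.symm (finProdFinEquiv (i0,0))).2 = _
      rw [Equiv.symm_apply_apply, hQv, pow_succ]
    · rw [hD.additive P Q ![1,0] c hP hQ probVec_b' hc, hDv]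
      push_cast
      ring

lemma aux_le' {c d : ℝ} (h : ∀ k : ℕ, 1 ≤ k → c * k ≤ d * k + 1) : c ≤ d := by
  by_contra hcd
  push_neg at hcd
  have hδ0 : 0 < c - d := by linarith
  set k : ℕ := ⌈1/(c-d)⌉₊ + 1 with hk
  have hk1 : 1 ≤ k := Nat.le_add_left 1 _
  have h2 := h k hk1
  have hkgt : (1:ℝ)/(c-d) < (k:ℝ) := by
    have h3 := Nat.le_ceil (1/(c-d))
    have h4 : ((⌈1/(c-d)⌉₊ : ℕ) : ℝ) < (k:ℝ) := by exact_mod_cast Nat.lt_succ_self _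
    linarith
  have h5 : 1 < (c-d) * k := by
    rw [div_lt_iff₀ hδ0] at hkgt
    linarith
  have h6 : (c-d) * k = c*k - d*k := by ring
  linarith

lemma pow_le_half_pow' {s : ℝ} (hs : 0 < s) {k m : ℕ} (h : (m:ℝ) ≤ -(Real.logb 2 s) * k) :
    s^k ≤ (1/2:ℝ)^m := by
  have e1 : s^k = (2:ℝ) ^ (Real.logb 2 s * (k:ℝ)) := by
    rw [Real.rpow_mul (by norm_num), Real.rpow_logb (by norm_num) (by norm_num) hs,
      Real.rpow_natCast]
  have e2 : ((1/2:ℝ))^m = (2:ℝ) ^ (-(m:ℝ)) := by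
    have h2 : ((1:ℝ)/2) = (2:ℝ) ^ (-1:ℝ) := by
      rw [Real.rpow_neg_one]; norm_num
    rw [h2, ← Real.rpow_natCast ((2:ℝ)^(-1:ℝ)) m, ← Real.rpow_mul (by norm_num)]
    norm_num
  rw [e1, e2]
  exact (Real.rpow_le_rpow_left_iff one_lt_two).2 (by linarith)

lemma half_pow_le_pow' {t : ℝ} (ht : 0 < t) {k m : ℕ} (h : -(m:ℝ) ≤ Real.logb 2 t * k) :
    (1/2:ℝ)^m ≤ t^k := by
  have e1 : t^k = (2:ℝ) ^ (Real.logb 2 t * (k:ℝ)) := by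
    rw [Real.rpow_mul (by norm_num), Real.rpow_logb (by norm_num) (by norm_num) ht,
      Real.rpow_natCast]
  have e2 : ((1/2:ℝ))^m = (2:ℝ) ^ (-(m:ℝ)) := by
    have h2 : ((1:ℝ)/2) = (2:ℝ) ^ (-1:ℝ) := by
      rw [Real.rpow_neg_one]; norm_num
    rw [h2, ← Real.rpow_natCast ((2:ℝ)^(-1:ℝ)) m, ← Real.rpow_mul (by norm_num)]
    norm_num
  rw [e1, e2]
  exact (Real.rpow_le_rpow_left_iff one_lt_two).2 h

end AuxRelEnt

/-- every relative entropy lies between `D_min` and `D_max`. -/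
theorem stmt4 (D : (n : ℕ) → (Fin n → ℝ) → (Fin n → ℝ) → ℝ≥0∞)
    (hD : IsRelativeEntropy D) (n : ℕ) (p q : Fin n → ℝ)
    (hp : IsProbVec p) (hq : IsProbVec q) :
    DminR p q ≤ D n p q ∧ D n p q ≤ DmaxR p q := by
  constructor
  · -- lower bound
    set s := ∑ i ∈ Finset.univ.filter (fun i => p i ≠ 0), q i with hs
    have hs1 : s ≤ 1 := by
      rw [hs, ← hq.2]
      exact Finset.sum_le_sum_of_subset_of_nonneg (Finset.filter_subset _ _)
        (fun i _ _ => hq.1 i)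
    have hs0 : 0 ≤ s := Finset.sum_nonneg (fun i _ => hq.1 i)
    have hps : IsProbVec ![s, 1-s] := probVec_pair' hs0 hs1
    have hDb : D 2 ![1,0] ![s,1-s] ≤ D n p q :=
      hD.dpi _ _ _ _ hp hq probVec_b' hps (L3low' hp hq)
    have KI : ∀ m k : ℕ, 1 ≤ m → s^k ≤ (1/2:ℝ)^m → (m : ℝ≥0∞) ≤ (k:ℝ≥0∞) * D n p q := by
      intro m k hm hsk
      obtain ⟨M, E, U, iE, hE, hU, hEpt, hUv, hEDv⟩ := TENS' D hD ![1/2,1/2] probVec_u' m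
      obtain ⟨K, P, Q, iP, hP, hQ, hPpt, hQv, hPDv⟩ := TENS' D hD ![s,1-s] hps k
      have hU0 : U iE = (1/2:ℝ)^m := by rw [hUv]; norm_num
      have hQ0 : Q iP = s^k := by rw [hQv]; norm_num
      have hlt1 : Q iP < 1 := by
        rw [hQ0]
        calc s^k ≤ (1/2:ℝ)^m := hsk
          _ ≤ (1/2:ℝ)^1 := pow_le_pow_of_le_one (by norm_num) (by norm_num) hm
          _ < 1 := by norm_num
      have hmaj : RelMaj P Q E U :=
        pointMaj' hQ hU hPpt hEpt (by rw [hQ0, hU0]; exact hsk) hlt1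
      have hDE : D M E U ≤ D K P Q := hD.dpi _ _ _ _ hP hQ hE hU hmaj
      have hnorm : D 2 ![1,0] ![1/2,1/2] = 1 := by
        rw [hD.normalized]; norm_num [Real.logb_self_eq_one]
      calc (m : ℝ≥0∞) = D M E U := by rw [hEDv, hnorm, mul_one]
        _ ≤ D K P Q := hDE
        _ = (k:ℝ≥0∞) * D 2 ![1,0] ![s,1-s] := hPDv
        _ ≤ (k:ℝ≥0∞) * D n p q := mul_le_mul_right hDb _
    by_cases hsz : s = 0
    · have hDtop : D n p q = ⊤ := by
        by_contra hfin
        set m := ⌈(D n p q).toReal⌉₊ + 1 with hm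
        have h1 := KI m 1 (Nat.le_add_left 1 _)
          (by rw [hsz, pow_one]; positivity)
        rw [Nat.cast_one, one_mul] at h1
        have h2 : (m:ℝ) ≤ (D n p q).toReal := by
          have h3 := ENNReal.toReal_mono hfin h1
          simpa using h3
        have hA : (D n p q).toReal ≤ (⌈(D n p q).toReal⌉₊ : ℝ) := Nat.le_ceil _
        have hB : ((⌈(D n p q).toReal⌉₊ : ℕ) : ℝ) + 1 = (m:ℝ) := by
          rw [hm]; push_cast; ring
        linarith
      rw [hDtop]
      exact le_top
    · have hs0' : 0 < s := lt_of_le_of_ne hs0 (Ne.symm hsz)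
      unfold DminR
      rw [← hs, if_neg hsz]
      by_cases hDt : D n p q = ⊤
      · rw [hDt]; exact le_top
      set d := (D n p q).toReal with hd
      set c := -(Real.logb 2 s) with hc
      have hc0 : 0 ≤ c := by
        have h6 := Real.logb_nonpos one_lt_two hs0 hs1
        rw [hc]; linarith
      have hd0 : 0 ≤ d := ENNReal.toReal_nonneg
      have key : ∀ k:ℕ, 1 ≤ k → c * k ≤ d * k + 1 := by
        intro k hk
        set m := ⌊c * k⌋₊ with hm
        by_cases hm1 : 1 ≤ m
        · have hsk : s^k ≤ (1/2:ℝ)^m := by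
            apply pow_le_half_pow' hs0'
            rw [← hc, hm]
            exact Nat.floor_le (by positivity)
          have h1 := KI m k hm1 hsk
          have hkD : (k:ℝ≥0∞) * D n p q ≠ ⊤ :=
            ENNReal.mul_ne_top (ENNReal.natCast_ne_top k) hDt
          have h2 : (m:ℝ) ≤ (k:ℝ) * d := by
            have h3 := ENNReal.toReal_mono hkD h1
            rw [ENNReal.toReal_mul] at h3
            simpa using h3
          have h4 : c * k < (m:ℝ) + 1 := by
            rw [hm]; exact_mod_cast Nat.lt_floor_add_one (c * k)
          linarith
        · push_neg at hm1
          have h5 : (⌊c * k⌋₊ : ℝ) = 0 := by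
            rw [← hm]; exact_mod_cast Nat.lt_one_iff.1 hm1
          have h6 : c * k < 1 := by
            have h7 := Nat.lt_floor_add_one (c * k)
            rw [← hm] at h7
            rw [← hm] at h5
            linarith
          nlinarith [mul_nonneg hd0 (Nat.cast_nonneg k : (0:ℝ) ≤ (k:ℝ))]
      have hcd : c ≤ d := aux_le' key
      calc ENNReal.ofReal (-(Real.logb 2 s)) = ENNReal.ofReal c := by rw [hc]
        _ ≤ ENNReal.ofReal d := ENNReal.ofReal_le_ofReal hcd
        _ = D n p q := ENNReal.ofReal_toReal hDt
  · -- upper bound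
    set L := ⨆ i, ENNReal.ofReal (p i) / ENNReal.ofReal (q i) with hL
    by_cases hLt : L = ⊤
    · unfold DmaxR
      rw [← hL, if_pos hLt]
      exact le_top
    · set lam := L.toReal with hlam
      have hple : ∀ i, p i ≤ lam * q i := by
        intro i
        have hi : ENNReal.ofReal (p i) / ENNReal.ofReal (q i) ≤ L := by
          rw [hL]; exact le_iSup (fun j => ENNReal.ofReal (p j) / ENNReal.ofReal (q j)) i
        by_cases hqi : q i = 0
        · have hpi : p i = 0 := by
            by_contra hpi
            have hp0 : 0 < p i := lt_of_le_of_ne (hp.1 i) (Ne.symm hpi)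
            have htop : ENNReal.ofReal (p i) / ENNReal.ofReal (q i) = ⊤ := by
              rw [hqi]
              rw [ENNReal.ofReal_zero, ENNReal.div_zero (by simp [ENNReal.ofReal_eq_zero, not_le, hp0])]
            rw [htop] at hi
            exact hLt (top_le_iff.1 hi)
          rw [hpi, hqi, mul_zero]
        · have hq0 : 0 < q i := lt_of_le_of_ne (hq.1 i) (Ne.symm hqi)
          have hq0' : ENNReal.ofReal (q i) ≠ 0 := by
            simp [ENNReal.ofReal_eq_zero, not_le, hq0]
          rw [ENNReal.div_le_iff hq0' ENNReal.ofReal_ne_top] at hi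
          calc p i = (ENNReal.ofReal (p i)).toReal := (ENNReal.toReal_ofReal (hp.1 i)).symm
            _ ≤ (L * ENNReal.ofReal (q i)).toReal :=
                ENNReal.toReal_mono (ENNReal.mul_ne_top hLt ENNReal.ofReal_ne_top) hi
            _ = lam * q i := by rw [ENNReal.toReal_mul, ENNReal.toReal_ofReal (hq.1 i), hlam]
      have hlam1 : 1 ≤ lam := by
        have h1 : (1:ℝ) = ∑ i, p i := hp.2.symm
        have h2 : ∑ i, p i ≤ ∑ i, lam * q i := Finset.sum_le_sum (fun i _ => hple i)
        have h3 : ∑ i, lam * q i = lam := by rw [← Finset.mul_sum, hq.2, mul_one]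
        linarith
      have hlam0 : 0 < lam := lt_of_lt_of_le one_pos hlam1
      set t := lam⁻¹ with ht
      have ht0 : 0 < t := inv_pos.2 hlam0
      have ht1 : t ≤ 1 := by rw [ht]; exact inv_le_one_of_one_le₀ hlam1
      have htle : ∀ i, t * p i ≤ q i := by
        intro i
        rw [ht]
        calc lam⁻¹ * p i ≤ lam⁻¹ * (lam * q i) :=
              mul_le_mul_of_nonneg_left (hple i) (inv_nonneg.2 hlam0.le)
          _ = q i := by field_simp
      have hpt : IsProbVec ![t, 1-t] := probVec_pair' ht0.le ht1
      have hDb : D n p q ≤ D 2 ![1,0] ![t,1-t] :=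
        hD.dpi _ _ _ _ probVec_b' hpt hp hq (L3up' hp hq ht0 ht1 htle)
      have KI2 : ∀ m k : ℕ, 1 ≤ m → (1/2:ℝ)^m ≤ t^k → (k:ℝ≥0∞) * D n p q ≤ (m:ℝ≥0∞) := by
        intro m k hm hsk
        obtain ⟨M, E, U, iE, hE, hU, hEpt, hUv, hEDv⟩ := TENS' D hD ![1/2,1/2] probVec_u' m
        obtain ⟨K, P, Q, iP, hP, hQ, hPpt, hQv, hPDv⟩ := TENS' D hD ![t,1-t] hpt k
        have hU0 : U iE = (1/2:ℝ)^m := by rw [hUv]; norm_num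
        have hQ0 : Q iP = t^k := by rw [hQv]; norm_num
        have hlt1 : U iE < 1 := by
          rw [hU0]
          calc (1/2:ℝ)^m ≤ (1/2:ℝ)^1 := pow_le_pow_of_le_one (by norm_num) (by norm_num) hm
            _ < 1 := by norm_num
        have hmaj : RelMaj E U P Q :=
          pointMaj' hU hQ hEpt hPpt (by rw [hQ0, hU0]; exact hsk) hlt1
        have hDE : D K P Q ≤ D M E U := hD.dpi _ _ _ _ hE hU hP hQ hmaj
        have hnorm : D 2 ![1,0] ![1/2,1/2] = 1 := by
          rw [hD.normalized]; norm_num [Real.logb_self_eq_one]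
        calc (k:ℝ≥0∞) * D n p q ≤ (k:ℝ≥0∞) * D 2 ![1,0] ![t,1-t] := mul_le_mul_right hDb _
          _ = D K P Q := hPDv.symm
          _ ≤ D M E U := hDE
          _ = (m:ℝ≥0∞) := by rw [hEDv, hnorm, mul_one]
      set c := Real.logb 2 lam with hc
      have hc0 : 0 ≤ c := Real.logb_nonneg one_lt_two hlam1
      have hlogt : Real.logb 2 t = -c := by rw [ht, Real.logb_inv, hc]
      have hDt : D n p q ≠ ⊤ := by
        have hpow : (1/2:ℝ)^(⌊c⌋₊ + 1) ≤ t^1 := by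
          apply half_pow_le_pow' ht0
          rw [hlogt]
          have h5 : c < (⌊c⌋₊:ℝ) + 1 := Nat.lt_floor_add_one c
          have h6 : ((⌊c⌋₊ + 1 : ℕ):ℝ) = (⌊c⌋₊:ℝ) + 1 := by push_cast; ring
          rw [neg_mul, Nat.cast_one, mul_one, h6]
          linarith
        have h1 := KI2 (⌊c⌋₊ + 1) 1 (Nat.le_add_left 1 _) hpow
        rw [Nat.cast_one, one_mul] at h1
        exact ne_top_of_le_ne_top (ENNReal.natCast_ne_top _) h1
      set d := (D n p q).toReal with hd
      have key : ∀ k:ℕ, 1 ≤ k → d * k ≤ c * k + 1 := by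
        intro k hk
        set m := ⌊c * k⌋₊ + 1 with hm
        have hm1 : 1 ≤ m := Nat.le_add_left 1 _
        have hmc : ((m:ℕ):ℝ) = (⌊c * k⌋₊:ℝ) + 1 := by rw [hm]; push_cast; ring
        have hpow : (1/2:ℝ)^m ≤ t^k := by
          apply half_pow_le_pow' ht0
          rw [hlogt]
          have h5 : c * k < (⌊c * k⌋₊:ℝ) + 1 := Nat.lt_floor_add_one _
          rw [neg_mul, hmc]
          linarith
        have h1 := KI2 m k hm1 hpow
        have h2 : (k:ℝ) * d ≤ (m:ℝ) := by
          have h3 := ENNReal.toReal_mono (ENNReal.natCast_ne_top m) h1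
          rw [ENNReal.toReal_mul] at h3
          simpa using h3
        have h4 : (⌊c * k⌋₊ : ℝ) ≤ c * k := Nat.floor_le (by positivity)
        rw [hmc] at h2
        linarith
      have hcd : d ≤ c := aux_le' key
      unfold DmaxR
      rw [← hL, if_neg hLt]
      calc D n p q = ENNReal.ofReal d := (ENNReal.ofReal_toReal hDt).symm
        _ ≤ ENNReal.ofReal (Real.logb 2 L.toReal) :=
            ENNReal.ofReal_le_ofReal (by rw [← hlam, ← hc]; exact hcd)
end

section
/- Let n ∈ ℕ, p ∈ P(n), and let q ∈ P(n) have strictly positive rational entries, say q = (k₁/k, k₂/k, …, k_n/k) with k₁,…,k_n ∈ ℕ positive and Σ_x k_x = k. Define r ∈ P(k) as the concatenation r = ⊕_{x=1}^n p_x·u_{k_x} (i.e. for each x, a block of k_x consecutive entries each equal to p_x/k_x). Then (p,q) ≽ (r,u_k) and (r,u_k) ≽ (p,q). -/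
open scoped BigOperators ENNReal

/-- for rational `q = (k₁/k, …, kₙ/k)` with positive `kₓ` summing to `k`,
the block vector `r = ⊕ₓ pₓ · u_{kₓ}` (block `x` occupies the `kₓ` positions
`[Σ_{y<x} k_y, Σ_{y≤x} k_y)` and each of its entries equals `pₓ/kₓ`) satisfies
`(p,q) ≽ (r,u_k)` and `(r,u_k) ≽ (p,q)`. -/
theorem stmt11 (n k : ℕ) (p q : Fin n → ℝ) (hp : IsProbVec p)
    (kv : Fin n → ℕ) (hkv : ∀ x, 0 < kv x) (hsum : ∑ x, kv x = k)
    (hq : ∀ x, q x = (kv x : ℝ) / (k : ℝ))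
    (r : Fin k → ℝ)
    (hr : ∀ (j : Fin k) (x : Fin n),
      (∑ y ∈ Finset.univ.filter (fun y => y < x), kv y) ≤ (j : ℕ) →
      (j : ℕ) < (∑ y ∈ Finset.univ.filter (fun y => y ≤ x), kv y) →
      r j = p x / (kv x : ℝ)) :
    RelMaj p q r (uniform k) ∧ RelMaj r (uniform k) p q := by
  have hn : 0 < n := by
    by_contra h
    push_neg at h
    interval_cases n
    simpa using hp.2
  have hk : 0 < k := by
    rw [← hsum]
    exact Finset.sum_pos (fun x _ => hkv x) ⟨⟨0, hn⟩, Finset.mem_univ _⟩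
  set S : Fin n → ℕ := fun x => ∑ y ∈ Finset.univ.filter (fun y => y < x), kv y with hS
  have hSx : ∀ x, S x + kv x = ∑ y ∈ Finset.univ.filter (fun y => y ≤ x), kv y := by
    intro x
    have hins : Finset.univ.filter (fun y => y ≤ x)
        = insert x (Finset.univ.filter (fun y => y < x)) := by
      ext y
      simp [le_iff_lt_or_eq, or_comm]
    rw [hins, Finset.sum_insert (by simp)]
    ring
  have hmono : ∀ x x' : Fin n, x < x' → S x + kv x ≤ S x' := by
    intro x x' h
    rw [hSx]
    apply Finset.sum_le_sum_of_subset
    intro y hy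
    simp only [Finset.mem_filter, Finset.mem_univ, true_and] at *
    exact lt_of_le_of_lt hy h
  have hle : ∀ x, S x + kv x ≤ k := by
    intro x
    rw [hSx, ← hsum]
    exact Finset.sum_le_sum_of_subset (Finset.subset_univ _)
  set g : (Σ x : Fin n, Fin (kv x)) → Fin k :=
    fun s => ⟨S s.1 + (s.2 : ℕ), lt_of_lt_of_le (by have := s.2.isLt; omega) (hle s.1)⟩ with hg
  have hginj : Function.Injective g := by
    rintro ⟨x, i⟩ ⟨x', i'⟩ h
    have hval : S x + (i : ℕ) = S x' + (i' : ℕ) := congrArg Fin.val h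
    have hxx : x = x' := by
      rcases lt_trichotomy x x' with hlt | heq | hlt
      · have := hmono x x' hlt; have := i.isLt; omega
      · exact heq
      · have := hmono x' x hlt; have := i'.isLt; omega
    subst hxx
    simp only [Sigma.mk.inj_iff, heq_eq_eq, true_and]
    exact Fin.ext (by omega)
  have hgbij : Function.Bijective g := by
    rw [Fintype.bijective_iff_injective_and_card]
    refine ⟨hginj, ?_⟩
    simp [Fintype.card_sigma, hsum]
  set ψ : (Σ x : Fin n, Fin (kv x)) ≃ Fin k := Equiv.ofBijective g hgbij with hψ
  set φ : Fin k → Fin n := fun j => (ψ.symm j).1 with hφ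
  have hψapp : ∀ s, ψ s = g s := fun s => rfl
  have hφg : ∀ (x : Fin n) (i : Fin (kv x)), φ (g ⟨x, i⟩) = x := by
    intro x i
    simp only [hφ]
    rw [← hψapp, Equiv.symm_apply_apply]
  have hblock : ∀ j : Fin k, S (φ j) ≤ (j : ℕ) ∧ (j : ℕ) < S (φ j) + kv (φ j) := by
    intro j
    have h1 : g (ψ.symm j) = j := ψ.apply_symm_apply j
    have h2 : S (ψ.symm j).1 + ((ψ.symm j).2 : ℕ) = (j : ℕ) := congrArg Fin.val h1
    have h3 := (ψ.symm j).2.isLt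
    simp only [hφ]
    omega
  have hrval : ∀ j : Fin k, r j = p (φ j) / (kv (φ j) : ℝ) := by
    intro j
    obtain ⟨h1, h2⟩ := hblock j
    exact hr j (φ j) h1 (by rw [← hSx]; exact h2)
  -- sum over a block
  have hsum' : ∀ (f : Fin k → ℝ) (x : Fin n),
      ∑ j, (if φ j = x then f j else 0) = ∑ i : Fin (kv x), f (g ⟨x, i⟩) := by
    intro f x
    rw [← Equiv.sum_comp ψ (fun j => if φ j = x then f j else 0), ← Finset.univ_sigma_univ, Finset.sum_sigma]
    rw [Finset.sum_eq_single_of_mem x (Finset.mem_univ x)]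
    · apply Finset.sum_congr rfl
      intro i _
      rw [hψapp, hφg, if_pos rfl]
    · intro x' _ hx'
      apply Finset.sum_eq_zero
      intro i _
      rw [hψapp, hφg, if_neg hx']
  have hkvne : ∀ x, (kv x : ℝ) ≠ 0 := fun x => Nat.cast_ne_zero.mpr (hkv x).ne'
  have hkne : (k : ℝ) ≠ 0 := Nat.cast_ne_zero.mpr hk.ne'
  constructor
  · -- (p, q) ≽ (r, u_k)
    refine ⟨fun x j => if φ j = x then ((kv x : ℝ))⁻¹ else 0, ⟨?_, ?_⟩, ?_, ?_⟩
    · intro i j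
      dsimp only
      split <;> positivity
    · intro x
      rw [hsum' (fun _ => ((kv x : ℝ))⁻¹) x]
      simp [hkvne x]
    · funext j
      simp only [Matrix.vecMul, dotProduct, mul_ite, mul_zero]
      rw [Finset.sum_ite_eq Finset.univ (φ j)]
      simp [hrval j, div_eq_mul_inv]
    · funext j
      simp only [Matrix.vecMul, dotProduct, mul_ite, mul_zero]
      rw [Finset.sum_ite_eq Finset.univ (φ j)]
      simp only [Finset.mem_univ, if_pos, uniform, hq]
      rw [div_mul_eq_mul_div, mul_inv_cancel₀ (hkvne (φ j)), one_div]
  · -- (r, u_k) ≽ (p, q)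
    refine ⟨fun j x => if φ j = x then (1 : ℝ) else 0, ⟨?_, ?_⟩, ?_, ?_⟩
    · intro i j
      dsimp only
      split <;> norm_num
    · intro j
      rw [Finset.sum_ite_eq Finset.univ (φ j) (fun _ => (1:ℝ))]
      simp
    · funext x
      simp only [Matrix.vecMul, dotProduct, mul_ite, mul_one, mul_zero]
      rw [hsum' r x]
      have : ∀ i : Fin (kv x), r (g ⟨x, i⟩) = p x / (kv x : ℝ) := by
        intro i
        rw [hrval, hφg]
      rw [Finset.sum_congr rfl (fun i _ => this i), Finset.sum_const,
        Finset.card_univ, Fintype.card_fin, nsmul_eq_mul, mul_comm,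
        div_mul_cancel₀ _ (hkvne x)]
    · funext x
      simp only [Matrix.vecMul, dotProduct, mul_ite, mul_one, mul_zero]
      rw [hsum' (uniform k) x]
      simp [uniform, hq, div_eq_mul_inv]
end

section
/- Let 𝔻 be a monotone divergence, n ∈ ℕ, and let q ∈ P(n) have strictly positive rational entries, say q_x = k_x/k with k_x ∈ ℕ positive and Σ_x k_x = k. Then for every p ∈ P(n) there exists r ∈ P(k) such that 𝔻(p‖q) = 𝔻(r‖u_k), where u_k ∈ P(k) is the uniform vector. -/
open scoped BigOperators ENNReal

/-- for a monotone divergence `𝔻` and rational strictly positive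
`q = (k₁/k, …, kₙ/k)`, every `p ∈ P(n)` admits `r ∈ P(k)` with
`𝔻(p‖q) = 𝔻(r‖u_k)`. -/
theorem stmt12 (D : (n : ℕ) → (Fin n → ℝ) → (Fin n → ℝ) → ℝ≥0∞)
    (hD : IsMonotoneDivergence D) (n k : ℕ)
    (q : Fin n → ℝ) (kv : Fin n → ℕ) (hkv : ∀ x, 0 < kv x) (hsum : ∑ x, kv x = k)
    (hq : ∀ x, q x = (kv x : ℝ) / (k : ℝ)) :
    ∀ p : Fin n → ℝ, IsProbVec p →
      ∃ r : Fin k → ℝ, IsProbVec r ∧ D n p q = D k r (uniform k) := by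
  intro p hp
  -- n > 0 and k > 0
  have hn : 0 < n := by
    rcases Nat.eq_zero_or_pos n with h | h
    · exfalso; subst h
      have := hp.2
      simp at this
    · exact h
  have hk : 0 < k := by
    subst hsum
    exact Finset.sum_pos (fun x _ => hkv x) (by simpa [Finset.univ_nonempty_iff] using
      (Fin.pos_iff_nonempty.mp hn))
  have hkR : (0:ℝ) < (k:ℝ) := by exact_mod_cast hk
  -- equivalence between Fin k and the sigma type of blocks
  have hcard : Fintype.card (Σ x : Fin n, Fin (kv x)) = Fintype.card (Fin k) := by
    simp [Fintype.card_sigma, hsum]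
  let e : Fin k ≃ Σ x : Fin n, Fin (kv x) := (Fintype.equivOfCardEq hcard).symm
  let blk : Fin k → Fin n := fun j => (e j).1
  have hkvR : ∀ x, (0:ℝ) < (kv x : ℝ) := fun x => by exact_mod_cast hkv x
  -- key sum identity
  have key : ∀ f : Fin n → ℝ, ∑ j : Fin k, f (blk j) = ∑ x, (kv x : ℝ) * f x := by
    intro f
    have := Equiv.sum_comp e (fun s : Σ x : Fin n, Fin (kv x) => f s.1)
    rw [show (∑ j : Fin k, f (blk j)) = ∑ j : Fin k, (fun s : Σ x : Fin n, Fin (kv x) => f s.1) (e j) from rfl, this]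
    rw [← Finset.univ_sigma_univ, Finset.sum_sigma]
    simp [Finset.sum_const, mul_comm]
  -- define r
  set r : Fin k → ℝ := fun j => p (blk j) * ((kv (blk j) : ℝ))⁻¹ with hr
  have hrsum : ∑ j, r j = 1 := by
    rw [hr]
    rw [key (fun x => p x * ((kv x : ℝ))⁻¹)]
    have : ∀ x : Fin n, (kv x : ℝ) * (p x * ((kv x : ℝ))⁻¹) = p x := by
      intro x
      rw [mul_comm, mul_assoc, inv_mul_cancel₀ (hkvR x).ne', mul_one]
    simp only [this]
    exact hp.2
  have hrprob : IsProbVec r := by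
    constructor
    · intro j
      exact mul_nonneg (hp.1 _) (inv_nonneg.mpr (le_of_lt (hkvR _)))
    · exact hrsum
  have hqprob : IsProbVec q := by
    constructor
    · intro x; rw [hq x]; positivity
    · have : ∑ x, q x = (∑ x, (kv x : ℝ)) / (k:ℝ) := by
        rw [Finset.sum_div]; exact Finset.sum_congr rfl fun x _ => hq x
      rw [this]
      rw [show (∑ x, (kv x : ℝ)) = (k:ℝ) by exact_mod_cast congrArg Nat.cast hsum]
      field_simp
  have huprob : IsProbVec (uniform k) := by
    constructor
    · intro j
      exact inv_nonneg.mpr (le_of_lt hkR)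
    · simp only [uniform, Finset.sum_const, Finset.card_univ, Fintype.card_fin, nsmul_eq_mul]
      field_simp
  -- forward channel W : n → k
  set W : Matrix (Fin n) (Fin k) ℝ := fun x j => if blk j = x then ((kv x : ℝ))⁻¹ else 0 with hW
  have hWstoch : IsStochastic W := by
    constructor
    · intro i j
      rw [hW]; dsimp only
      split
      · exact inv_nonneg.mpr (le_of_lt (hkvR _))
      · exact le_refl 0
    · intro x
      rw [hW]; dsimp only
      have h2 : ∑ j : Fin k, (if blk j = x then ((kv x : ℝ))⁻¹ else 0)
          = ∑ y, (kv y : ℝ) * (if y = x then ((kv x : ℝ))⁻¹ else 0) :=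
        key (fun y => if y = x then ((kv x : ℝ))⁻¹ else 0)
      rw [h2, Finset.sum_eq_single x]
      · simp [mul_inv_cancel₀ (hkvR x).ne']
      · intro b _ hb; simp [hb]
      · intro h; exact absurd (Finset.mem_univ x) h
  have hpW : Matrix.vecMul p W = r := by
    funext j
    rw [Matrix.vecMul, hW]
    simp only [dotProduct, mul_ite, mul_zero]
    rw [Finset.sum_ite_eq Finset.univ (blk j) (fun x => p x * ((kv x : ℝ))⁻¹)]
    simp [hr]
  have hqW : Matrix.vecMul q W = uniform k := by
    funext j
    rw [Matrix.vecMul, hW]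
    simp only [dotProduct, mul_ite, mul_zero]
    rw [Finset.sum_ite_eq Finset.univ (blk j) (fun x => q x * ((kv x : ℝ))⁻¹)]
    simp only [Finset.mem_univ, if_true]
    rw [hq, uniform, div_mul_eq_mul_div, mul_inv_cancel₀ (hkvR _).ne', one_div]
  -- backward channel V : k → n
  set V : Matrix (Fin k) (Fin n) ℝ := fun j x => if blk j = x then 1 else 0 with hV
  have hVstoch : IsStochastic V := by
    constructor
    · intro j x
      rw [hV]; dsimp only; split <;> norm_num
    · intro j
      rw [hV]; dsimp only
      simp
  have hrV : Matrix.vecMul r V = p := by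
    funext x
    rw [Matrix.vecMul, hV]
    simp only [dotProduct, mul_ite, mul_one, mul_zero]
    have h1 : ∑ j : Fin k, (if blk j = x then r j else 0)
        = ∑ j : Fin k, (p (blk j) * ((kv (blk j) : ℝ))⁻¹ * (if blk j = x then (1:ℝ) else 0)) := by
      apply Finset.sum_congr rfl
      intro j _; rw [hr]; dsimp only; split <;> simp
    have h2 : ∑ j : Fin k, (p (blk j) * ((kv (blk j) : ℝ))⁻¹ * (if blk j = x then (1:ℝ) else 0))
        = ∑ y, (kv y : ℝ) * (p y * ((kv y : ℝ))⁻¹ * (if y = x then (1:ℝ) else 0)) :=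
      key (fun y => p y * ((kv y : ℝ))⁻¹ * (if y = x then (1:ℝ) else 0))
    rw [h1, h2, Finset.sum_eq_single x]
    · rw [if_pos rfl, mul_one, mul_comm, mul_assoc, inv_mul_cancel₀ (hkvR x).ne', mul_one]
    · intro b _ hb; simp [hb]
    · intro h; exact absurd (Finset.mem_univ x) h
  have huV : Matrix.vecMul (uniform k) V = q := by
    funext x
    rw [Matrix.vecMul, hV]
    simp only [dotProduct, uniform, mul_ite, mul_one, mul_zero]
    have h2 : ∑ j : Fin k, (if blk j = x then ((k:ℝ))⁻¹ else 0)
        = ∑ y, (kv y : ℝ) * (if y = x then ((k:ℝ))⁻¹ else 0) :=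
      key (fun y => if y = x then ((k:ℝ))⁻¹ else 0)
    rw [h2, Finset.sum_eq_single x]
    · rw [if_pos rfl, hq x]; ring
    · intro b _ hb; simp [hb]
    · intro h; exact absurd (Finset.mem_univ x) h
  refine ⟨r, hrprob, le_antisymm ?_ ?_⟩
  · exact hD.dpi r (uniform k) p q hrprob huprob hp hqprob ⟨V, hVstoch, hrV, huV⟩
  · exact hD.dpi p q r (uniform k) hp hqprob hrprob huprob ⟨W, hWstoch, hpW, hqW⟩
end

section
/- Let m, n ∈ ℕ, p, q ∈ P(m) and p', q' ∈ P(n), and suppose both p' and q have all entries strictly positive. Then (p,q) ≽_c (p',q') if and only if there exist sequences {q_k} ⊂ P(m) and {q'_k} ⊂ P(n) with q_k → q and q'_k → q' such that (p, q_k) ≽* (p', q'_k) for all k ∈ ℕ. -/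
open scoped BigOperators ENNReal

/-- Relative trumping: `(p,q) ≽* (p',q')` if there are finite-dimensional catalysts
`r, t` with `t` strictly positive such that `(p⊗r, q⊗t) ≽ (p'⊗r, q'⊗t)`. -/
def RelTrump {n m : ℕ} (p q : Fin n → ℝ) (p' q' : Fin m → ℝ) : Prop :=
  ∃ (k : ℕ) (r t : Fin k → ℝ), IsProbVec r ∧ IsProbVec t ∧ (∀ i, 0 < t i) ∧
    RelMaj (kron p r) (kron q t) (kron p' r) (kron q' t)

open Filter Topology in
/-- Catalytic relative majorisation: `(p,q) ≽_c (p',q')` if `(p,q)` and `(p',q')` are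
entrywise limits of sequences related by relative trumping. -/
def CatRelMaj {n m : ℕ} (p q : Fin n → ℝ) (p' q' : Fin m → ℝ) : Prop :=
  ∃ (pk qk : ℕ → Fin n → ℝ) (pk' qk' : ℕ → Fin m → ℝ),
    (∀ k, IsProbVec (pk k) ∧ IsProbVec (qk k) ∧ IsProbVec (pk' k) ∧ IsProbVec (qk' k)) ∧
    Tendsto pk atTop (𝓝 p) ∧ Tendsto qk atTop (𝓝 q) ∧
    Tendsto pk' atTop (𝓝 p') ∧ Tendsto qk' atTop (𝓝 q') ∧
    ∀ k, RelTrump (pk k) (qk k) (pk' k) (qk' k)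



lemma relMaj_trans {n m l : ℕ} {p q : Fin n → ℝ} {p' q' : Fin m → ℝ} {p'' q'' : Fin l → ℝ}
    (h1 : RelMaj p q p' q') (h2 : RelMaj p' q' p'' q'') : RelMaj p q p'' q'' := by
  obtain ⟨W, ⟨hWn, hWs⟩, hW1, hW2⟩ := h1
  obtain ⟨V, ⟨hVn, hVs⟩, hV1, hV2⟩ := h2
  refine ⟨W * V, ⟨?_, ?_⟩, ?_, ?_⟩
  · intro i j
    rw [Matrix.mul_apply]
    exact Finset.sum_nonneg fun x _ => mul_nonneg (hWn i x) (hVn x j)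
  · intro i
    simp only [Matrix.mul_apply]
    rw [Finset.sum_comm]
    calc ∑ x, ∑ j, W i x * V x j = ∑ x, W i x * ∑ j, V x j := by
          simp [Finset.mul_sum]
      _ = 1 := by simp only [hVs, mul_one]; exact hWs i
  · rw [← Matrix.vecMul_vecMul, hW1, hV1]
  · rw [← Matrix.vecMul_vecMul, hW2, hV2]

lemma relMaj_kron {n m k : ℕ} {p q : Fin n → ℝ} {p' q' : Fin m → ℝ} (r t : Fin k → ℝ)
    (h : RelMaj p q p' q') : RelMaj (kron p r) (kron q t) (kron p' r) (kron q' t) := by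
  obtain ⟨W, ⟨hWn, hWs⟩, hW1, hW2⟩ := h
  set M : Matrix (Fin (n * k)) (Fin (m * k)) ℝ := fun x y =>
    W (finProdFinEquiv.symm x).1 (finProdFinEquiv.symm y).1 *
      (if (finProdFinEquiv.symm x).2 = (finProdFinEquiv.symm y).2 then 1 else 0) with hM
  have key : ∀ (u : Fin n → ℝ) (v : Fin k → ℝ), Matrix.vecMul (kron u v) M
      = kron (Matrix.vecMul u W) v := by
    intro u v
    funext y
    simp only [Matrix.vecMul, dotProduct, kron, hM]
    rw [← finProdFinEquiv.sum_comp]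
    simp only [Equiv.symm_apply_apply]
    rw [Fintype.sum_prod_type, Finset.sum_mul]
    refine Finset.sum_congr rfl fun x1 _ => ?_
    simp only [mul_ite, mul_one, mul_zero]
    rw [Finset.sum_ite_eq' Finset.univ ((finProdFinEquiv.symm y).2)
      (fun x2 => u x1 * v x2 * W x1 (finProdFinEquiv.symm y).1)]
    simp; ring
  refine ⟨M, ⟨?_, ?_⟩, key p r ▸ by rw [hW1], key q t ▸ by rw [hW2]⟩
  · intro i j
    have := hWn (finProdFinEquiv.symm i).1 (finProdFinEquiv.symm j).1
    simp only [hM]; positivity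
  · intro i
    simp only [hM]
    rw [← finProdFinEquiv.sum_comp]
    simp only [Equiv.symm_apply_apply]
    rw [Fintype.sum_prod_type]
    simp only [mul_ite, mul_one, mul_zero]
    rw [Finset.sum_comm, Finset.sum_comm]
    simp only [Finset.sum_ite_eq, Finset.mem_univ, if_true]
    exact hWs _

lemma relMaj_relTrump {n m l : ℕ} {p q : Fin n → ℝ} {p' q' : Fin m → ℝ} {p'' q'' : Fin l → ℝ}
    (h1 : RelMaj p q p' q') (h2 : RelTrump p' q' p'' q'') : RelTrump p q p'' q'' := by
  obtain ⟨k, r, t, hr, ht, htpos, hmaj⟩ := h2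
  exact ⟨k, r, t, hr, ht, htpos, relMaj_trans (relMaj_kron r t h1) hmaj⟩

lemma relTrump_relMaj {n m l : ℕ} {p q : Fin n → ℝ} {p' q' : Fin m → ℝ} {p'' q'' : Fin l → ℝ}
    (h1 : RelTrump p q p' q') (h2 : RelMaj p' q' p'' q'') : RelTrump p q p'' q'' := by
  obtain ⟨k, r, t, hr, ht, htpos, hmaj⟩ := h1
  exact ⟨k, r, t, hr, ht, htpos, relMaj_trans hmaj (relMaj_kron r t h2)⟩

/-- The mixing channel `W i j = (1-ε) δ_{ij} + (a' j - (1-ε) a j)` maps `a ↦ a'` and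
`b ↦ (1-ε) b + (a' - (1-ε) a)`. -/
lemma shift_relMaj {m : ℕ} (a b a' b' : Fin m → ℝ) (ε : ℝ) (hε1 : ε ≤ 1)
    (ha : ∑ j, a j = 1) (ha' : ∑ j, a' j = 1) (hb : ∑ j, b j = 1)
    (h1 : ∀ j, (1 - ε) * a j ≤ a' j)
    (hb' : ∀ j, b' j = (1 - ε) * b j + (a' j - (1 - ε) * a j)) :
    RelMaj a b a' b' := by
  set W : Matrix (Fin m) (Fin m) ℝ := fun i j =>
    (1 - ε) * (if i = j then 1 else 0) + (a' j - (1 - ε) * a j) with hW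
  have hvm : ∀ u : Fin m → ℝ, ∑ j, u j = 1 → Matrix.vecMul u W
      = fun j => (1 - ε) * u j + (a' j - (1 - ε) * a j) := by
    intro u hu
    funext j
    simp only [Matrix.vecMul, dotProduct, hW, mul_add, mul_ite, mul_one, mul_zero,
      Finset.sum_add_distrib]
    rw [Finset.sum_ite_eq' Finset.univ j (fun x => u x * (1 - ε))]
    rw [← Finset.sum_mul, hu]
    simp [mul_comm]
  refine ⟨W, ⟨?_, ?_⟩, ?_, ?_⟩
  · intro i j
    have h2 := h1 j
    have h0 : (0:ℝ) ≤ if i = j then (1:ℝ) else 0 := by split <;> norm_num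
    have h3 : (0:ℝ) ≤ (1 - ε) * (if i = j then 1 else 0) :=
      mul_nonneg (by linarith) h0
    simp only [hW]
    linarith
  · intro i
    simp only [hW, Finset.sum_add_distrib, Finset.sum_sub_distrib]
    rw [← Finset.mul_sum, Finset.sum_ite_eq Finset.univ i (fun _ => (1:ℝ))]
    rw [ha', ← Finset.mul_sum, ha]
    simp
  · rw [hvm a ha]; funext j; ring
  · rw [hvm b hb]; funext j; rw [hb' j]

open Filter Topology in
/-- if `p'` and `q` are strictly positive, then `(p,q) ≽_c (p',q')` iff
there are sequences `q_k → q` and `q'_k → q'` of probability vectors with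
`(p, q_k) ≽* (p', q'_k)` for all `k`. -/
theorem stmt18 (m n : ℕ) (p q : Fin m → ℝ) (p' q' : Fin n → ℝ)
    (hp : IsProbVec p) (hq : IsProbVec q) (hp' : IsProbVec p') (hq' : IsProbVec q')
    (hp'pos : ∀ i, 0 < p' i) (hqpos : ∀ i, 0 < q i) :
    CatRelMaj p q p' q' ↔
      ∃ (qk : ℕ → Fin m → ℝ) (qk' : ℕ → Fin n → ℝ),
        (∀ k, IsProbVec (qk k)) ∧ (∀ k, IsProbVec (qk' k)) ∧
        Tendsto qk atTop (𝓝 q) ∧ Tendsto qk' atTop (𝓝 q') ∧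
        ∀ k, RelTrump p (qk k) p' (qk' k) := by
  constructor
  · rintro ⟨pk, qk, pk', qk', hprob, hpk, hqk, hpk', hqk', htr⟩
    -- basic facts
    have hm : 0 < m := by
      rcases Nat.eq_zero_or_pos m with h | h
      · exfalso; subst h; simpa using hq.2
      · exact h
    have hple : ∀ j, p j ≤ 1 := by
      intro j
      rw [← hp.2]
      exact Finset.single_le_sum (fun i _ => hp.1 i) (Finset.mem_univ j)
    have hqle : ∀ j, q j ≤ 1 := by
      intro j
      rw [← hq.2]
      exact Finset.single_le_sum (fun i _ => hq.1 i) (Finset.mem_univ j)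
    have hq'le : ∀ j, q' j ≤ 1 := by
      intro j
      rw [← hq'.2]
      exact Finset.single_le_sum (fun i _ => hq'.1 i) (Finset.mem_univ j)
    have hpk'le : ∀ k j, pk' k j ≤ 1 := by
      intro k j
      rw [← (hprob k).2.2.1.2]
      exact Finset.single_le_sum (fun i _ => (hprob k).2.2.1.1 i) (Finset.mem_univ j)
    -- minimum of q
    obtain ⟨j0, -, hj0⟩ := Finset.exists_min_image Finset.univ q ⟨⟨0, hm⟩, Finset.mem_univ _⟩
    set c0 : ℝ := q j0 with hc0
    have hc0pos : 0 < c0 := hqpos j0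
    have hc0le : ∀ j, c0 ≤ q j := fun j => hj0 j (Finset.mem_univ j)
    set d : ℝ := min c0 1 / 2 with hd
    have hdpos : 0 < d := by
      have : 0 < min c0 1 := lt_min hc0pos one_pos
      positivity
    have hdlt : ∀ j, d < q j := by
      intro j
      have h1 : min c0 1 ≤ c0 := min_le_left _ _
      have := hc0le j
      simp only [hd]; linarith
    have hdhalf : d ≤ 1/2 := by
      have : min c0 1 ≤ 1 := min_le_right _ _
      simp only [hd]; linarith
    set δ : ℕ → ℝ := fun t => d / (t + 1) with hδ
    have hδpos : ∀ t, 0 < δ t := by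
      intro t; simp only [hδ]; positivity
    have hδled : ∀ t, δ t ≤ d := by
      intro t
      simp only [hδ]
      rw [div_le_iff₀ (by positivity : (0:ℝ) < (t:ℝ) + 1)]
      nlinarith [Nat.cast_nonneg (α := ℝ) t]
    have hδhalf : ∀ t, δ t ≤ 1/2 := fun t => le_trans (hδled t) hdhalf
    have h1δpos : ∀ t, (0:ℝ) < 1 - δ t := by
      intro t; have := hδhalf t; linarith
    have hδ0 : Tendsto δ atTop (𝓝 0) := by
      have h1 := tendsto_one_div_add_atTop_nhds_zero_nat.const_mul d
      simp only [mul_zero] at h1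
      convert h1 using 2 with t
      simp [hδ, div_eq_mul_inv, one_div]
    -- per-coordinate convergence
    have Hpk : ∀ j, Tendsto (fun k => pk k j) atTop (𝓝 (p j)) := fun j => tendsto_pi_nhds.mp hpk j
    have Hqk : ∀ j, Tendsto (fun k => qk k j) atTop (𝓝 (q j)) := fun j => tendsto_pi_nhds.mp hqk j
    have Hpk' : ∀ j, Tendsto (fun k => pk' k j) atTop (𝓝 (p' j)) :=
      fun j => tendsto_pi_nhds.mp hpk' j
    have Hqk' : ∀ j, Tendsto (fun k => qk' k j) atTop (𝓝 (q' j)) :=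
      fun j => tendsto_pi_nhds.mp hqk' j
    -- choose good indices
    have H : ∀ t : ℕ, ∃ k,
        (∀ j, (1 - δ t) * p j ≤ pk k j) ∧
        (∀ j, pk k j - (1 - δ t) * p j ≤ qk k j) ∧
        (∀ j, (1 - δ t) * pk' k j ≤ p' j) ∧
        (∀ j, |pk k j - p j| ≤ δ t) ∧ (∀ j, |qk k j - q j| ≤ δ t) ∧
        (∀ j, |pk' k j - p' j| ≤ δ t) ∧ (∀ j, |qk' k j - q' j| ≤ δ t) := by
      intro t
      have e1 : ∀ᶠ k in atTop, ∀ j, (1 - δ t) * p j ≤ pk k j := by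
        rw [eventually_all]
        intro j
        rcases eq_or_lt_of_le (hp.1 j) with h | h
        · exact Filter.Eventually.of_forall fun k => by
            rw [← h]; simpa using (hprob k).1.1 j
        · have hlt : (1 - δ t) * p j < p j := by nlinarith [hδpos t]
          exact ((Hpk j).eventually_const_lt hlt).mono fun k hk => le_of_lt hk
      have e2 : ∀ᶠ k in atTop, ∀ j, pk k j - (1 - δ t) * p j ≤ qk k j := by
        rw [eventually_all]
        intro j
        have hlim : Tendsto (fun k => pk k j - qk k j) atTop (𝓝 (p j - q j)) :=
          (Hpk j).sub (Hqk j)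
        have hlt : p j - q j < (1 - δ t) * p j := by
          have h1 : δ t * p j ≤ δ t := by
            nlinarith [hδpos t, hp.1 j, hple j]
          have h2 : δ t < q j := lt_of_le_of_lt (hδled t) (hdlt j)
          nlinarith
        exact (hlim.eventually_lt_const hlt).mono fun k hk => by linarith
      have e3 : ∀ᶠ k in atTop, ∀ j, (1 - δ t) * pk' k j ≤ p' j := by
        rw [eventually_all]
        intro j
        have hlim : Tendsto (fun k => (1 - δ t) * pk' k j) atTop (𝓝 ((1 - δ t) * p' j)) :=
          (Hpk' j).const_mul _
        have hlt : (1 - δ t) * p' j < p' j := by nlinarith [hδpos t, hp'pos j]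
        exact (hlim.eventually_lt_const hlt).mono fun k hk => le_of_lt hk
      have habs : ∀ {N : ℕ} (u : ℕ → Fin N → ℝ) (v : Fin N → ℝ),
          (∀ j, Tendsto (fun k => u k j) atTop (𝓝 (v j))) →
          ∀ᶠ k in atTop, ∀ j, |u k j - v j| ≤ δ t := by
        intro N u v hu
        rw [eventually_all]
        intro j
        have := (Metric.tendsto_atTop.mp (hu j)) (δ t) (hδpos t)
        obtain ⟨M, hM⟩ := this
        rw [eventually_atTop]
        exact ⟨M, fun k hk => by have := hM k hk; rw [Real.dist_eq] at this; linarith⟩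
      have := (((((e1.and e2).and e3).and (habs pk p Hpk)).and (habs qk q Hqk)).and
        ((habs pk' p' Hpk').and (habs qk' q' Hqk')))
      obtain ⟨k, hk⟩ := this.exists
      exact ⟨k, hk.1.1.1.1.1, hk.1.1.1.1.2, hk.1.1.1.2, hk.1.1.2, hk.1.2, hk.2.1, hk.2.2⟩
    choose K hK using H
    -- define the new sequences
    set Qk : ℕ → Fin m → ℝ := fun t j =>
      (qk (K t) j - pk (K t) j + (1 - δ t) * p j) / (1 - δ t) with hQk
    set Qk' : ℕ → Fin n → ℝ := fun t j =>
      (1 - δ t) * qk' (K t) j + (p' j - (1 - δ t) * pk' (K t) j) with hQk'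
    have hQkprob : ∀ t, IsProbVec (Qk t) := by
      intro t
      constructor
      · intro j
        have h2 := (hK t).2.1 j
        have := h1δpos t
        have h3 := h1δpos t
        simp only [hQk]
        apply div_nonneg (by linarith) (le_of_lt h3)
      · simp only [hQk]
        rw [← Finset.sum_div]
        rw [Finset.sum_add_distrib, Finset.sum_sub_distrib, ← Finset.mul_sum]
        rw [hp.2, (hprob (K t)).1.2, (hprob (K t)).2.1.2]
        rw [mul_one, sub_self, zero_add]
        exact div_self (ne_of_gt (h1δpos t))
    have hQk'prob : ∀ t, IsProbVec (Qk' t) := by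
      intro t
      constructor
      · intro j
        have h3 := (hK t).2.2.1 j
        have h4 := (hprob (K t)).2.2.2.1 j
        have h5 := h1δpos t
        simp only [hQk']
        nlinarith
      · simp only [hQk']
        rw [Finset.sum_add_distrib, Finset.sum_sub_distrib, ← Finset.mul_sum, ← Finset.mul_sum]
        rw [hp'.2, (hprob (K t)).2.2.1.2, (hprob (K t)).2.2.2.2]
        ring
    have htrump : ∀ t, RelTrump p (Qk t) p' (Qk' t) := by
      intro t
      have step1 : RelMaj p (Qk t) (pk (K t)) (qk (K t)) := by
        refine shift_relMaj p (Qk t) (pk (K t)) (qk (K t)) (δ t) (by linarith [hδhalf t])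
          hp.2 (hprob (K t)).1.2 (hQkprob t).2 ((hK t).1) ?_
        intro j
        have h5 := h1δpos t
        simp only [hQk]
        rw [mul_comm ((1:ℝ) - δ t), div_mul_cancel₀ _ (ne_of_gt h5)]
        ring
      have step3 : RelMaj (pk' (K t)) (qk' (K t)) p' (Qk' t) := by
        refine shift_relMaj (pk' (K t)) (qk' (K t)) p' (Qk' t) (δ t) (by linarith [hδhalf t])
          (hprob (K t)).2.2.1.2 hp'.2 (hprob (K t)).2.2.2.2 ((hK t).2.2.1) ?_
        intro j
        simp only [hQk']
      exact relMaj_relTrump step1 (relTrump_relMaj (htr (K t)) step3)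
    have h8δ : Tendsto (fun t => 8 * δ t) atTop (𝓝 0) := by
      simpa using hδ0.const_mul 8
    have hQktend : Tendsto Qk atTop (𝓝 q) := by
      rw [tendsto_pi_nhds]
      intro j
      rw [tendsto_iff_dist_tendsto_zero]
      apply squeeze_zero (fun t => dist_nonneg) _ h8δ
      intro t
      rw [Real.dist_eq]
      have hA := abs_le.mp ((hK t).2.2.2.1 j)
      have hB := abs_le.mp ((hK t).2.2.2.2.1 j)
      have h5 := h1δpos t
      have h6 := hδpos t
      have h7 := hδhalf t
      have heq : Qk t j - q j =
          ((qk (K t) j - q j) - (pk (K t) j - p j) - δ t * p j + δ t * q j) / (1 - δ t) := by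
        simp only [hQk]
        rw [eq_div_iff (ne_of_gt h5), sub_mul, div_mul_cancel₀ _ (ne_of_gt h5)]
        ring
      rw [heq, abs_le]
      have hd1 : (0:ℝ) ≤ δ t * p j := mul_nonneg (le_of_lt h6) (hp.1 j)
      have hd2 : δ t * p j ≤ δ t := mul_le_of_le_one_right (le_of_lt h6) (hple j)
      have hd3 : (0:ℝ) ≤ δ t * q j := mul_nonneg (le_of_lt h6) (hq.1 j)
      have hd4 : δ t * q j ≤ δ t := mul_le_of_le_one_right (le_of_lt h6) (hqle j)
      have hsq : δ t * δ t ≤ δ t * (1/2) := mul_le_mul_of_nonneg_left (hδhalf t) (le_of_lt h6)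
      constructor
      · rw [le_div_iff₀ h5]
        have hexp : -(8 * δ t) * (1 - δ t) = -(8 * δ t) + 8 * (δ t * δ t) := by ring
        rw [hexp]
        linarith
      · rw [div_le_iff₀ h5]
        have hexp : 8 * δ t * (1 - δ t) = 8 * δ t - 8 * (δ t * δ t) := by ring
        rw [hexp]
        linarith
    have hQk'tend : Tendsto Qk' atTop (𝓝 q') := by
      rw [tendsto_pi_nhds]
      intro j
      rw [tendsto_iff_dist_tendsto_zero]
      apply squeeze_zero (fun t => dist_nonneg) _ h8δ
      intro t
      rw [Real.dist_eq]
      have hA := abs_le.mp ((hK t).2.2.2.2.2.1 j)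
      have hB := abs_le.mp ((hK t).2.2.2.2.2.2 j)
      have h5 := h1δpos t
      have h6 := hδpos t
      have h7 := hδhalf t
      have heq : Qk' t j - q' j =
          (1 - δ t) * (qk' (K t) j - q' j) - δ t * q' j + (p' j - pk' (K t) j)
            + δ t * pk' (K t) j := by
        simp only [hQk']
        ring
      rw [heq, abs_le]
      have hd1 : (0:ℝ) ≤ δ t * q' j := mul_nonneg (le_of_lt h6) (hq'.1 j)
      have hd2 : δ t * q' j ≤ δ t := mul_le_of_le_one_right (le_of_lt h6) (hq'le j)
      have hd3 : (0:ℝ) ≤ δ t * pk' (K t) j := mul_nonneg (le_of_lt h6) ((hprob (K t)).2.2.1.1 j)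
      have hd4 : δ t * pk' (K t) j ≤ δ t :=
        mul_le_of_le_one_right (le_of_lt h6) (hpk'le (K t) j)
      have hf1 : (1 - δ t) * δ t ≤ δ t := mul_le_of_le_one_left (le_of_lt h6) (by linarith)
      have hf0 : (0:ℝ) ≤ (1 - δ t) * δ t := mul_nonneg (le_of_lt h5) (le_of_lt h6)
      have hd5 : (1 - δ t) * (qk' (K t) j - q' j) ≤ δ t :=
        le_trans (mul_le_mul_of_nonneg_left hB.2 (le_of_lt h5)) hf1
      have hd6 : -δ t ≤ (1 - δ t) * (qk' (K t) j - q' j) := by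
        have := mul_le_mul_of_nonneg_left hB.1 (le_of_lt h5)
        have hneg : (1 - δ t) * (-δ t) = -((1 - δ t) * δ t) := by ring
        rw [hneg] at this
        linarith
      constructor <;> linarith
    exact ⟨Qk, Qk', hQkprob, hQk'prob, hQktend, hQk'tend, htrump⟩

  · rintro ⟨qk, qk', hqkp, hqk'p, hqkt, hqk't, htr⟩
    exact ⟨fun _ => p, qk, fun _ => p', qk', fun k => ⟨hp, hqkp k, hp', hqk'p k⟩,
      tendsto_const_nhds, hqkt, tendsto_const_nhds, hqk't, htr⟩
end
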